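/- arXiv:1504.06558 — 9 statements merged into one kernel-verified Lean document; each statement's English description precedes it below -/
import Mathlib

section
/- Let P = {p_k : k ≥ 1} be a probability distribution on a countably infinite alphabet whose effective cardinality K = #{k : p_k > 0} is infinite. Then there exists a constant c > 0 and a sequence of positive integers {n_k : k ≥ 1} with n_k → ∞ as k → ∞ such that the tail index satisfies t_{n_k} > c for all sufficiently large k. -/
/-!
A small atom `q = p_k > 0` alone already contributes `n q (1 - q)^n` to `t_n`, and at
`n = ⌈1/q⌉` this is bounded below by the absolute constant `exp (-3)`. Infinitely many
positive atoms must tend to `0`, so these choices of `n` tend to infinity.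
-/

open Filter Topology

/-- The tail index `t_n = n * ∑_k p_k (1 - p_k)^n` of a distribution `p` on a
countable alphabet. -/
noncomputable def tailIndex (p : ℕ → ℝ) (n : ℕ) : ℝ :=
  (n : ℝ) * ∑' k, p k * (1 - p k) ^ n

open Real

lemma Real.exp_neg_two_mul_le_one_sub {q : ℝ} (hq0 : 0 ≤ q) (hq : q ≤ 1 / 2) :
    exp (-(2 * q)) ≤ 1 - q := by
  rw [exp_neg, inv_le_comm₀ (exp_pos _) (by linarith)]
  calc (1 - q)⁻¹ ≤ 1 + 2 * q := by
        rw [inv_le_iff_one_le_mul₀ (by linarith)]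
        nlinarith
    _ ≤ exp (2 * q) := by linarith [add_one_le_exp (2 * q)]

/- With `m = ⌈1/q⌉` we have `1 ≤ m q < 3/2`, so `(1 - q)^m ≥ exp (-2 m q) > exp (-3)`. -/
lemma exp_neg_three_lt_ceil_inv_mul_one_sub_pow {q : ℝ} (hq0 : 0 < q) (hq : q ≤ 1 / 2) :
    exp (-3) < ⌈q⁻¹⌉₊ * (q * (1 - q) ^ ⌈q⁻¹⌉₊) := by
  set m := ⌈q⁻¹⌉₊
  have hmq_ge : 1 ≤ m * q := (inv_le_iff_one_le_mul₀ hq0).mp (Nat.le_ceil _)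
  have hmq_lt : m * q < 3 / 2 := by
    have := mul_lt_mul_of_pos_right (Nat.ceil_lt_add_one (inv_nonneg.2 hq0.le)) hq0
    rw [add_mul, inv_mul_cancel₀ hq0.ne'] at this
    linarith
  have hpow : exp (-3) < (1 - q) ^ m :=
    calc exp (-3) < exp (m * -(2 * q)) := exp_lt_exp.2 (by linarith)
      _ = exp (-(2 * q)) ^ m := by rw [exp_nat_mul]
      _ ≤ (1 - q) ^ m := pow_le_pow_left₀ (exp_pos _).le (exp_neg_two_mul_le_one_sub hq0.le hq) m
  calc exp (-3) < (m * q) * (1 - q) ^ m := by nlinarith [exp_pos (-3)]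
    _ = m * (q * (1 - q) ^ m) := by ring

lemma mul_mul_one_sub_pow_le_tailIndex {p : ℕ → ℝ} (hp : ∀ k, 0 ≤ p k) (hp1 : ∀ k, p k ≤ 1)
    (hs : Summable p) (n k : ℕ) : n * (p k * (1 - p k) ^ n) ≤ tailIndex p n := by
  have hterm_nonneg : ∀ i, 0 ≤ p i * (1 - p i) ^ n := fun i =>
    mul_nonneg (hp i) (pow_nonneg (sub_nonneg.2 (hp1 i)) n)
  have hterm_le : ∀ i, p i * (1 - p i) ^ n ≤ p i := fun i =>
    mul_le_of_le_one_right (hp i) (pow_le_one₀ (sub_nonneg.2 (hp1 i)) (by linarith [hp i]))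
  have hs' : Summable fun i => p i * (1 - p i) ^ n := hs.of_nonneg_of_le hterm_nonneg hterm_le
  exact mul_le_mul_of_nonneg_left (hs'.le_tsum k fun i _ => hterm_nonneg i) n.cast_nonneg

lemma exists_pos_tendsto_zero_of_infinite {p : ℕ → ℝ} (hp : Tendsto p atTop (𝓝 0))
    (hK : {k | 0 < p k}.Infinite) :
    ∃ K : ℕ → ℕ, (∀ j, 0 < p (K j)) ∧ Tendsto (p ∘ K) atTop (𝓝 0) :=
  ⟨Nat.nth (fun k => 0 < p k), Nat.nth_mem_of_infinite hK,
    hp.comp (Nat.nth_strictMono hK).tendsto_atTop⟩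

/-- If the effective cardinality of a distribution is infinite, there are a constant `c > 0`
and a sequence of positive integers `n_k → ∞` with `t_{n_k} > c` for all large `k`. -/
theorem stmt0 (p : ℕ → ℝ) (hp : ∀ k, 0 ≤ p k) (hsum : ∑' k, p k = 1)
    (hK : {k | 0 < p k}.Infinite) :
    ∃ c : ℝ, 0 < c ∧ ∃ N : ℕ → ℕ, (∀ k, 0 < N k) ∧ Tendsto N atTop atTop ∧
      ∀ᶠ k in atTop, c < tailIndex p (N k) := by
  have hs : Summable p := by
    by_contra h
    simp [tsum_eq_zero_of_not_summable h] at hsum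
  have hp1 : ∀ k, p k ≤ 1 := fun k => hsum ▸ hs.le_tsum k fun i _ => hp i
  obtain ⟨K, hpos, hlim⟩ := exists_pos_tendsto_zero_of_infinite hs.tendsto_atTop_zero hK
  have hlim' : Tendsto (p ∘ K) atTop (𝓝[>] 0) :=
    tendsto_nhdsWithin_iff.2 ⟨hlim, .of_forall hpos⟩
  refine ⟨exp (-3), exp_pos _, fun j => ⌈(p (K j))⁻¹⌉₊, fun j => Nat.ceil_pos.2 (inv_pos.2 (hpos j)),
    tendsto_nat_ceil_atTop.comp (tendsto_inv_nhdsGT_zero.comp hlim'), ?_⟩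
  filter_upwards [hlim.eventually (ge_mem_nhds (by norm_num : (0 : ℝ) < 1 / 2))] with j hj
  exact (exp_neg_three_lt_ceil_inv_mul_one_sub_pow (hpos j) hj).trans_le
    (mul_mul_one_sub_pow_le_tailIndex hp hp1 hs _ _)
end

section
/- Let P = {p_k : k ≥ 1} be a probability distribution on a countably infinite alphabet whose effective cardinality K = #{k : p_k > 0} is infinite. Then limsup_{n→∞} t_n ≥ e^{−1}; that is, e^{−1} is a uniform positive lower bound for limsup_{n→∞} t_n over all distributions with positive probabilities on infinitely many letters. -/
/-!
A letter of small probability `x` alone forces `t_{m+1} ≥ (m + 1) x (1 - x)^(m+1)` at the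
scale `m = ⌊1/x⌋`, and since `1/(m + 1) < x ≤ 1/m` this is at least `(1 - 1/m)^(m+1) → e⁻¹`.
Infinitely many positive probabilities tending to zero supply arbitrarily large such scales.
-/

open Filter Topology

lemma tendsto_one_sub_inv_pow_succ :
    Tendsto (fun m : ℕ => (1 - 1 / (m : ℝ)) ^ (m + 1)) atTop (𝓝 (Real.exp 1)⁻¹) := by
  have hpow := Real.tendsto_one_add_div_pow_exp (-1)
  have hlin : Tendsto (fun m : ℕ => 1 + -1 / (m : ℝ)) atTop (𝓝 1) := by
    simpa using (tendsto_const_div_atTop_nhds_zero_nat (-1 : ℝ)).const_add 1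
  simpa [pow_succ, ← Real.exp_neg, sub_eq_add_neg, neg_div] using hpow.mul hlin

lemma one_sub_inv_pow_succ_le_mul_one_sub_pow {x : ℝ} (hx₀ : 0 < x) (hx₁ : x ≤ 1) :
    (1 - 1 / (⌊x⁻¹⌋₊ : ℝ)) ^ (⌊x⁻¹⌋₊ + 1) ≤
      ((⌊x⁻¹⌋₊ + 1 : ℕ) : ℝ) * x * (1 - x) ^ (⌊x⁻¹⌋₊ + 1) := by
  set m := ⌊x⁻¹⌋₊
  have hm : (1 : ℝ) ≤ m := by
    exact_mod_cast Nat.le_floor (by simpa using one_le_inv₀ hx₀ |>.2 hx₁)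
  have hxm : x ≤ 1 / m := by
    rw [le_div_iff₀ (by linarith), ← le_div_iff₀' hx₀, one_div]
    exact Nat.floor_le (by positivity)
  have hmx : 1 ≤ ((m + 1 : ℕ) : ℝ) * x := by
    rw [← div_le_iff₀ hx₀, one_div]
    exact_mod_cast (Nat.lt_floor_add_one x⁻¹).le
  calc (1 - 1 / (m : ℝ)) ^ (m + 1) ≤ (1 - x) ^ (m + 1) := by
        gcongr
        rwa [sub_nonneg, div_le_one (by linarith)]
    _ ≤ ((m + 1 : ℕ) : ℝ) * x * (1 - x) ^ (m + 1) :=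
        le_mul_of_one_le_left (pow_nonneg (by linarith) _) hmx

section Distribution

variable {p : ℕ → ℝ}

lemma mul_one_sub_pow_le_tsum (hp : ∀ k, 0 ≤ p k) (hle : ∀ k, p k ≤ 1) (hs : Summable p)
    (n k : ℕ) : p k * (1 - p k) ^ n ≤ ∑' j, p j * (1 - p j) ^ n := by
  have hterm : ∀ j, 0 ≤ p j * (1 - p j) ^ n :=
    fun j => mul_nonneg (hp j) (pow_nonneg (sub_nonneg.2 (hle j)) n)
  have hbound : ∀ j, p j * (1 - p j) ^ n ≤ p j :=
    fun j => mul_le_of_le_one_right (hp j)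
      (pow_le_one₀ (sub_nonneg.2 (hle j)) (by linarith [hp j]))
  exact (hs.of_nonneg_of_le hterm hbound).le_tsum k fun j _ => hterm j

lemma exists_pos_lt_of_infinite (hs : Summable p) (hK : {k | 0 < p k}.Infinite)
    {ε : ℝ} (hε : 0 < ε) : ∃ k, 0 < p k ∧ p k < ε :=
  ((Nat.frequently_atTop_iff_infinite.2 hK).and_eventually
    (hs.tendsto_atTop_zero.eventually (eventually_lt_nhds hε))).exists

lemma frequently_one_sub_inv_pow_succ_le_tailIndex (hp : ∀ k, 0 ≤ p k) (hle : ∀ k, p k ≤ 1)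
    (hs : Summable p) (hK : {k | 0 < p k}.Infinite) :
    ∃ᶠ m : ℕ in atTop, (1 - 1 / (m : ℝ)) ^ (m + 1) ≤ tailIndex p (m + 1) := by
  refine frequently_atTop.2 fun M : ℕ => ?_
  obtain ⟨k, hk₀, hkM⟩ :=
    exists_pos_lt_of_infinite hs hK (inv_pos.2 (M.cast_add_one_pos (α := ℝ)))
  refine ⟨⌊(p k)⁻¹⌋₊, Nat.le_floor ?_, ?_⟩
  · have := (lt_inv_comm₀ hk₀ M.cast_add_one_pos).1 hkM
    linarith
  · calc _
        ≤ ((⌊(p k)⁻¹⌋₊ + 1 : ℕ) : ℝ) * p k * (1 - p k) ^ (⌊(p k)⁻¹⌋₊ + 1) :=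
          one_sub_inv_pow_succ_le_mul_one_sub_pow hk₀ (hle k)
      _ ≤ tailIndex p (⌊(p k)⁻¹⌋₊ + 1) := by
          rw [tailIndex, mul_assoc]
          exact mul_le_mul_of_nonneg_left (mul_one_sub_pow_le_tsum hp hle hs _ k) (by positivity)

end Distribution

/-- For every distribution with infinitely many positive probabilities,
`limsup_{n→∞} t_n ≥ e⁻¹`. -/
theorem stmt1 (p : ℕ → ℝ) (hp : ∀ k, 0 ≤ p k) (hsum : ∑' k, p k = 1)
    (hK : {k | 0 < p k}.Infinite) :
    (((Real.exp 1)⁻¹ : ℝ) : EReal) ≤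
      Filter.limsup (fun n : ℕ => ((tailIndex p n : ℝ) : EReal)) atTop := by
  have hs : Summable p := by
    by_contra h
    simp [tsum_eq_zero_of_not_summable h] at hsum
  have hle : ∀ k, p k ≤ 1 := fun k => hsum ▸ hs.le_tsum k fun j _ => hp j
  have hfreq := frequently_one_sub_inv_pow_succ_le_tailIndex hp hle hs hK
  calc (((Real.exp 1)⁻¹ : ℝ) : EReal)
      = liminf (fun m : ℕ => (((1 - 1 / (m : ℝ)) ^ (m + 1) : ℝ) : EReal)) atTop :=
        (EReal.tendsto_coe.2 tendsto_one_sub_inv_pow_succ).liminf_eq.symm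
    _ ≤ limsup (fun m : ℕ => ((tailIndex p (m + 1) : ℝ) : EReal)) atTop :=
        liminf_le_limsup_of_frequently_le (hfreq.mono fun _ h => EReal.coe_le_coe_iff.2 h)
    _ = _ := limsup_nat_add (fun n : ℕ => ((tailIndex p n : ℝ) : EReal)) 1
end

section
/- Let P = {p_k : k ≥ 1} be a probability distribution on a countable alphabet, and let δ ∈ (0,1) and c > 0 be constants. Then n^{1−δ} Σ_{k≥1} p_k (1 − p_k)^n → c as n → ∞ if and only if n^{1−δ} Σ_{k≥1} p_k e^{−n p_k} → c as n → ∞. -/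
/-!
For `0 ≤ p ≤ 1` we have `(1 - p)^n ≤ e^{-np}`, and since `e^{-p} - (1 - p) ≤ p²` the bound
`aⁿ - bⁿ ≤ n (a - b) aⁿ⁻¹` gives `n (e^{-np} - (1 - p)^n) ≤ e (np)² e^{-np} ≤ 4e`.
Averaging against the distribution, the two sums differ by at most `4e / n`, which the factor
`n^{1-δ}` cannot compensate when `δ > 0`; so the two normalised sequences have the same limits.
-/

open Filter Topology Real

lemma tendsto_iff_of_tendsto_sub_nhds_zero {α G : Type*} [AddCommGroup G] [TopologicalSpace G]
    [IsTopologicalAddGroup G] {l : Filter α} {f g : α → G} {c : G}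
    (h : Tendsto (fun x => g x - f x) l (𝓝 0)) :
    Tendsto f l (𝓝 c) ↔ Tendsto g l (𝓝 c) :=
  ⟨fun hf => by simpa using hf.add h, fun hg => by simpa using hg.sub h⟩

lemma tendsto_rpow_one_sub_mul_nhds_zero {D : ℕ → ℝ} {C δ : ℝ} (hδ : 0 < δ)
    (hD : ∀ n, 0 ≤ D n) (hnD : ∀ n : ℕ, n * D n ≤ C) :
    Tendsto (fun n : ℕ => (n : ℝ) ^ (1 - δ) * D n) atTop (𝓝 0) := by
  have hlim : Tendsto (fun n : ℕ => C * (n : ℝ) ^ (-δ)) atTop (𝓝 0) := by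
    simpa using ((tendsto_rpow_neg_atTop hδ).comp tendsto_natCast_atTop_atTop).const_mul C
  refine squeeze_zero' (.of_forall fun n => by have := hD n; positivity) ?_ hlim
  filter_upwards [eventually_gt_atTop 0] with n hn
  have hn : (0 : ℝ) < n := by exact_mod_cast hn
  calc (n : ℝ) ^ (1 - δ) * D n = (n : ℝ) ^ (-δ) * (n * D n) := by
        rw [sub_eq_neg_add, rpow_add hn, rpow_one]; ring
    _ ≤ C * (n : ℝ) ^ (-δ) := by rw [mul_comm C]; gcongr; exact hnD n

lemma sq_mul_exp_neg_le_four {x : ℝ} (hx : 0 ≤ x) : x ^ 2 * exp (-x) ≤ 4 := by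
  have h := mul_exp_neg_le_exp_neg_one (x / 2)
  have hexp : exp (-x) = exp (-(x / 2)) ^ 2 := by rw [← exp_nat_mul]; ring_nf
  calc x ^ 2 * exp (-x) = 4 * (x / 2 * exp (-(x / 2))) ^ 2 := by rw [hexp]; ring
    _ ≤ 4 * exp (-1) ^ 2 := by gcongr
    _ ≤ 4 := by
        have : exp (-1) ≤ 1 := exp_le_one_iff.2 (by norm_num)
        nlinarith [exp_pos (-1)]

lemma exp_neg_sub_one_sub_le_sq {p : ℝ} (hp0 : 0 ≤ p) (hp1 : p ≤ 1) :
    exp (-p) - (1 - p) ≤ p ^ 2 := by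
  have h := abs_exp_sub_one_sub_id_le (x := -p) (by rwa [abs_neg, abs_of_nonneg hp0])
  linarith [(abs_le.1 h).2, neg_sq p]

lemma one_sub_pow_le_exp_neg_mul {p : ℝ} (hp : p ≤ 1) (n : ℕ) :
    (1 - p) ^ n ≤ exp (-n * p) := by
  rw [neg_mul, ← mul_neg, exp_nat_mul]
  exact pow_le_pow_left₀ (by linarith) (one_sub_le_exp_neg p) n

lemma natCast_mul_exp_neg_mul_sub_one_sub_pow_le {p : ℝ} (hp0 : 0 ≤ p) (hp1 : p ≤ 1) (n : ℕ) :
    n * (exp (-n * p) - (1 - p) ^ n) ≤ 4 * exp 1 := by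
  set a := exp (-p)
  have ha0 : 0 ≤ a := (exp_pos _).le
  have ha1 : a ≤ 1 := exp_le_one_iff.2 (by linarith)
  have hba : 1 - p ≤ a := one_sub_le_exp_neg p
  have han : exp (-n * p) = a ^ n := by rw [neg_mul, ← mul_neg, exp_nat_mul]
  have hpred : a ^ (n - 1) ≤ exp 1 * a ^ n := by
    calc a ^ (n - 1) = a ^ (n - 1 + 1) * exp p := by
          rw [pow_succ, mul_assoc, ← exp_add, neg_add_cancel, exp_zero, mul_one]
      _ ≤ a ^ n * exp 1 :=
          mul_le_mul (pow_le_pow_of_le_one ha0 ha1 (by omega)) (exp_le_exp.2 hp1)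
            (exp_pos p).le (by positivity)
      _ = exp 1 * a ^ n := mul_comm _ _
  have hmv := abs_pow_sub_pow_le a (1 - p) n
  rw [abs_of_nonneg (sub_nonneg.2 hba), max_eq_left (by rwa [abs_of_nonneg ha0,
    abs_of_nonneg (by linarith)]), abs_of_nonneg ha0] at hmv
  calc (n : ℝ) * (exp (-n * p) - (1 - p) ^ n)
      ≤ n * (p ^ 2 * n * (exp 1 * a ^ n)) := by
        rw [han]; gcongr
        calc a ^ n - (1 - p) ^ n ≤ (a - (1 - p)) * n * a ^ (n - 1) := (le_abs_self _).trans hmv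
          _ ≤ p ^ 2 * n * (exp 1 * a ^ n) := by
            gcongr
            exact exp_neg_sub_one_sub_le_sq hp0 hp1
    _ = exp 1 * ((n * p) ^ 2 * exp (-(n * p))) := by rw [← han, neg_mul]; ring
    _ ≤ 4 * exp 1 := by
        rw [mul_comm 4]; gcongr; exact sq_mul_exp_neg_le_four (by positivity)

section Distribution

variable {ι : Type*} {p : ι → ℝ}

lemma summable_of_tsum_eq_one (hsum : ∑' k, p k = 1) : Summable p := by
  by_contra h
  simp [tsum_eq_zero_of_not_summable h] at hsum

lemma le_one_of_tsum_eq_one (hp : ∀ k, 0 ≤ p k) (hsum : ∑' k, p k = 1) (k : ι) : p k ≤ 1 :=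
  hsum ▸ (summable_of_tsum_eq_one hsum).le_tsum k fun j _ => hp j

lemma Summable.mul_of_nonneg_of_le_one (hs : Summable p) (hp : ∀ k, 0 ≤ p k) {g : ι → ℝ}
    (hg0 : ∀ k, 0 ≤ g k) (hg1 : ∀ k, g k ≤ 1) : Summable fun k => p k * g k :=
  hs.of_nonneg_of_le (fun k => mul_nonneg (hp k) (hg0 k))
    fun k => mul_le_of_le_one_right (hp k) (hg1 k)

variable (hp : ∀ k, 0 ≤ p k) (hsum : ∑' k, p k = 1) (n : ℕ)
include hp hsum

lemma summable_mul_one_sub_pow : Summable fun k => p k * (1 - p k) ^ n :=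
  (summable_of_tsum_eq_one hsum).mul_of_nonneg_of_le_one hp
    (fun k => pow_nonneg (sub_nonneg.2 (le_one_of_tsum_eq_one hp hsum k)) n)
    fun k => pow_le_one₀ (sub_nonneg.2 (le_one_of_tsum_eq_one hp hsum k)) (by linarith [hp k])

lemma summable_mul_exp_neg_mul : Summable fun k => p k * exp (-n * p k) :=
  (summable_of_tsum_eq_one hsum).mul_of_nonneg_of_le_one hp (fun k => (exp_pos _).le)
    fun k => exp_le_one_iff.2 (by nlinarith [hp k, n.cast_nonneg (α := ℝ)])

lemma tsum_mul_one_sub_pow_le_tsum_mul_exp_neg_mul :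
    ∑' k, p k * (1 - p k) ^ n ≤ ∑' k, p k * exp (-n * p k) :=
  (summable_mul_one_sub_pow hp hsum n).tsum_le_tsum
    (fun k => mul_le_mul_of_nonneg_left
      (one_sub_pow_le_exp_neg_mul (le_one_of_tsum_eq_one hp hsum k) n) (hp k))
    (summable_mul_exp_neg_mul hp hsum n)

lemma natCast_mul_tsum_mul_exp_neg_mul_sub_le :
    n * (∑' k, p k * exp (-n * p k) - ∑' k, p k * (1 - p k) ^ n) ≤ 4 * exp 1 := by
  have hB := summable_mul_exp_neg_mul hp hsum n
  have hA := summable_mul_one_sub_pow hp hsum n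
  rw [← hB.tsum_sub hA, ← tsum_mul_left]
  calc ∑' k, n * (p k * exp (-n * p k) - p k * (1 - p k) ^ n)
      ≤ ∑' k, 4 * exp 1 * p k := by
        refine (hB.sub hA).mul_left _ |>.tsum_le_tsum (fun k => ?_)
          ((summable_of_tsum_eq_one hsum).mul_left _)
        rw [← mul_sub, mul_left_comm, mul_comm (4 * exp 1)]
        exact mul_le_mul_of_nonneg_left
          (natCast_mul_exp_neg_mul_sub_one_sub_pow_le (hp k) (le_one_of_tsum_eq_one hp hsum k) n)
          (hp k)
    _ = 4 * exp 1 := by rw [tsum_mul_left, hsum, mul_one]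

end Distribution

theorem stmt5_general (p : ℕ → ℝ) (hp : ∀ k, 0 ≤ p k) (hsum : ∑' k, p k = 1)
    (δ : ℝ) (hδ : δ ∈ Set.Ioo (0 : ℝ) 1) (c : ℝ) :
    Tendsto (fun n : ℕ => (n : ℝ) ^ ((1 : ℝ) - δ) * ∑' k, p k * (1 - p k) ^ n)
        atTop (𝓝 c) ↔
      Tendsto (fun n : ℕ => (n : ℝ) ^ ((1 : ℝ) - δ) * ∑' k, p k * Real.exp (-(n : ℝ) * p k))
        atTop (𝓝 c) := by
  refine tendsto_iff_of_tendsto_sub_nhds_zero ?_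
  simpa only [mul_sub] using tendsto_rpow_one_sub_mul_nhds_zero hδ.1
    (fun n => sub_nonneg.2 (tsum_mul_one_sub_pow_le_tsum_mul_exp_neg_mul hp hsum n))
    (natCast_mul_tsum_mul_exp_neg_mul_sub_le hp hsum)

/-- For a distribution `p`, constants `δ ∈ (0,1)` and `c > 0`,
`n^(1−δ) ∑_k p_k (1 − p_k)^n → c` iff `n^(1−δ) ∑_k p_k e^(−n p_k) → c`. -/
theorem stmt5 (p : ℕ → ℝ) (hp : ∀ k, 0 ≤ p k) (hsum : ∑' k, p k = 1)
    (δ : ℝ) (hδ : δ ∈ Set.Ioo (0 : ℝ) 1) (c : ℝ) (hc : 0 < c) :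
    Tendsto (fun n : ℕ => (n : ℝ) ^ ((1 : ℝ) - δ) * ∑' k, p k * (1 - p k) ^ n)
        atTop (𝓝 c) ↔
      Tendsto (fun n : ℕ => (n : ℝ) ^ ((1 : ℝ) - δ) * ∑' k, p k * Real.exp (-(n : ℝ) * p k))
        atTop (𝓝 c) :=
  stmt5_general p hp hsum δ hδ c
end

section
/- Let P = {p_k : k ≥ 1} be a probability distribution on a countable alphabet such that p_k = c k^{−λ} for all k ≥ k_0, where λ > 1, c > 0 are constants and k_0 ≥ 1 is an integer. Then n^{1 − 1/λ} Σ_{k≥1} p_k (1 − p_k)^n → c^{1/λ} λ^{−1} Γ(1 − 1/λ) > 0 as n → ∞, where Γ denotes the Gamma function; consequently t_n grows at the rate n^{1/λ}. -/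
open Filter Topology Set intervalIntegral MeasureTheory

lemma stmt7_hV (n : ℕ) (hn : 1 ≤ n) {p : ℝ} (h0 : 0 ≤ p) (h1 : p ≤ 1) :
    p * (1 - p) ^ n ≤ 1 / (Real.exp 1 * n) := by
  have h2 : (1 - p) ^ n ≤ Real.exp (-(n * p)) := by
    calc (1 - p) ^ n ≤ Real.exp (-p) ^ n := by
          apply pow_le_pow_left₀ (by linarith) ?_
          have := Real.add_one_le_exp (-p); linarith
      _ = Real.exp (-(n * p)) := by rw [← Real.exp_nat_mul]; ring_nf
  have h3 : p * (1 - p) ^ n ≤ p * Real.exp (-(n * p)) :=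
    mul_le_mul_of_nonneg_left h2 h0
  have h4 : (n : ℝ) * p * Real.exp (-(n * p)) ≤ Real.exp (-1 : ℝ) := by
    set t : ℝ := (n : ℝ) * p with ht
    have h5 : t ≤ Real.exp (t - 1) := by
      have := Real.add_one_le_exp (t - 1); linarith
    have h6 : 0 < Real.exp (-t) := Real.exp_pos _
    calc t * Real.exp (-t) ≤ Real.exp (t - 1) * Real.exp (-t) :=
          mul_le_mul_of_nonneg_right h5 h6.le
      _ = Real.exp (-1 : ℝ) := by rw [← Real.exp_add]; ring_nf
  have hnpos : (0:ℝ) < n := by exact_mod_cast hn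
  have hepos : (0:ℝ) < Real.exp 1 := Real.exp_pos 1
  rw [le_div_iff₀ (by positivity : (0:ℝ) < Real.exp 1 * n)]
  have e1 : Real.exp (-1:ℝ) * Real.exp 1 = 1 := by rw [← Real.exp_add]; norm_num
  have hA := mul_le_mul_of_nonneg_right h3 (by positivity : (0:ℝ) ≤ Real.exp 1 * ↑n)
  have hB := mul_le_mul_of_nonneg_right h4 hepos.le
  ring_nf at hA hB e1 ⊢
  linarith [hA, hB, e1]

lemma stmt7_mono (n : ℕ) :
    MonotoneOn (fun p : ℝ => p * (1 - p) ^ n) (Icc 0 (1 / (n + 1 : ℝ))) := by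
  have hder : ∀ p : ℝ, HasDerivAt (fun p : ℝ => p * (1 - p) ^ n)
      (1 * (1 - p) ^ n + p * (↑n * (1 - p) ^ (n - 1) * (-1))) p := by
    intro p
    exact (hasDerivAt_id p).mul (((hasDerivAt_id p).const_sub 1).pow n)
  apply monotoneOn_of_deriv_nonneg (convex_Icc _ _)
  · exact (Continuous.continuousOn (by continuity))
  · intro x hx
    exact (hder x).differentiableAt.differentiableWithinAt
  · intro x hx
    rw [interior_Icc] at hx
    rw [(hder x).deriv]
    rcases Nat.eq_zero_or_pos n with h0 | h1
    · subst h0; simp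
    · obtain ⟨m, rfl⟩ : ∃ m, n = m + 1 := ⟨n - 1, (Nat.succ_pred_eq_of_pos h1).symm⟩
      have hx1 : x < 1 / (m + 2 : ℝ) := by
        have := hx.2; push_cast at this ⊢; rw [show (m:ℝ) + 2 = m + 1 + 1 by ring]; exact this
      have hx2 : (m + 2 : ℝ) * x < 1 := by
        rw [lt_div_iff₀ (by positivity)] at hx1; linarith
      have hxlt1 : x < 1 := by nlinarith [hx.1]
      have key : (1:ℝ) * (1 - x) ^ (m + 1) + x * (↑(m + 1) * (1 - x) ^ (m + 1 - 1) * (-1))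
          = (1 - x) ^ m * (1 - (m + 2 : ℝ) * x) := by
        push_cast
        rw [pow_succ]
        ring_nf
      rw [key]
      have := pow_nonneg (by linarith : (0:ℝ) ≤ 1 - x) m
      nlinarith

lemma stmt7_anti (n : ℕ) (hn : 1 ≤ n) :
    AntitoneOn (fun p : ℝ => p * (1 - p) ^ n) (Icc (1 / (n + 1 : ℝ)) 1) := by
  have hder : ∀ p : ℝ, HasDerivAt (fun p : ℝ => p * (1 - p) ^ n)
      (1 * (1 - p) ^ n + p * (↑n * (1 - p) ^ (n - 1) * (-1))) p := by
    intro p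
    exact (hasDerivAt_id p).mul (((hasDerivAt_id p).const_sub 1).pow n)
  apply antitoneOn_of_deriv_nonpos (convex_Icc _ _)
  · exact (Continuous.continuousOn (by continuity))
  · intro x hx
    exact (hder x).differentiableAt.differentiableWithinAt
  · intro x hx
    rw [interior_Icc] at hx
    rw [(hder x).deriv]
    obtain ⟨m, rfl⟩ : ∃ m, n = m + 1 := ⟨n - 1, (Nat.succ_pred_eq_of_pos hn).symm⟩
    have hx1 : 1 / (m + 2 : ℝ) < x := by
      have := hx.1; push_cast at this ⊢; rw [show (m:ℝ) + 2 = m + 1 + 1 by ring]; exact this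
    have hx2 : 1 < (m + 2 : ℝ) * x := by
      rw [div_lt_iff₀ (by positivity)] at hx1; linarith
    have key : (1:ℝ) * (1 - x) ^ (m + 1) + x * (↑(m + 1) * (1 - x) ^ (m + 1 - 1) * (-1))
        = (1 - x) ^ m * (1 - (m + 2 : ℝ) * x) := by
      push_cast
      rw [pow_succ]
      ring_nf
    rw [key]
    have := pow_nonneg (by linarith [hx.2] : (0:ℝ) ≤ 1 - x) m
    nlinarith

lemma stmt7_W_integrable {s : ℝ} (hs : 0 < s) (n : ℕ) {a b : ℝ}
    (ha : 0 ≤ a) (hb : b ≤ 1) (hab : a ≤ b) :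
    IntervalIntegrable (fun u : ℝ => u ^ (s - 1) * (1 - u) ^ n) volume a b := by
  have hrpow : IntervalIntegrable (fun u : ℝ => u ^ (s - 1)) volume a b :=
    intervalIntegral.intervalIntegrable_rpow' (by linarith)
  apply hrpow.mono_fun
  · have m1 : Measurable (fun u : ℝ => u ^ (s - 1)) := by measurability
    have m2 : Measurable (fun u : ℝ => (1 - u) ^ n) :=
      (measurable_const.sub measurable_id).pow_const n
    exact (m1.mul m2).aestronglyMeasurable
  · rw [Filter.EventuallyLE, ae_restrict_iff' measurableSet_uIoc]
    filter_upwards with u hu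
    rw [uIoc_of_le hab] at hu
    have hu0 : 0 < u := lt_of_le_of_lt ha hu.1
    have hu1 : u ≤ 1 := le_trans hu.2 hb
    simp only [Real.norm_eq_abs]
    rw [abs_mul, abs_of_nonneg (Real.rpow_nonneg hu0.le _)]
    have h1 : |(1 - u) ^ n| ≤ 1 := by
      rw [abs_pow]
      apply pow_le_one₀ (abs_nonneg _)
      rw [abs_le]; constructor <;> linarith
    nlinarith [Real.rpow_nonneg hu0.le (s-1), abs_nonneg ((1-u)^n)]

lemma stmt7_beta_eq {s : ℝ} (hs : 0 < s) (n : ℕ) :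
    Real.GammaSeq s n = (n : ℝ) ^ s * ∫ x in (0:ℝ)..1, x ^ (s - 1) * (1 - x) ^ n := by
  have h := Complex.GammaSeq_eq_betaIntegral_of_re_pos (s := (s : ℂ)) (by simpa using hs) n
  have hbeta : Complex.betaIntegral s (n + 1)
      = ((∫ x in (0:ℝ)..1, x ^ (s - 1) * (1 - x) ^ n : ℝ) : ℂ) := by
    rw [Complex.betaIntegral, ← intervalIntegral.integral_ofReal]
    apply intervalIntegral.integral_congr
    intro x hx
    rw [uIcc_of_le zero_le_one] at hx
    have hx0 : (0:ℝ) ≤ x := hx.1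
    have hx1 : (0:ℝ) ≤ 1 - x := by linarith [hx.2]
    dsimp only
    have e1 : ((n:ℂ) + 1 - 1) = ((n : ℕ) : ℂ) := by ring
    rw [e1, Complex.cpow_natCast]
    have e2 : ((x:ℂ)) ^ ((s:ℂ) - 1) = ((x ^ (s - 1) : ℝ) : ℂ) := by
      rw [show ((s:ℂ) - 1) = (((s - 1 : ℝ)):ℂ) by push_cast; ring,
        ← Complex.ofReal_cpow hx0]
    have e3 : ((1 : ℂ) - (x:ℂ)) ^ n = (((1 - x) ^ n : ℝ) : ℂ) := by push_cast; ring
    rw [e2, e3]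
    push_cast
    ring
  have hGS : (Real.GammaSeq s n : ℂ) = Complex.GammaSeq s n := by
    dsimp only [Real.GammaSeq, Complex.GammaSeq]
    push_cast
    rw [Complex.ofReal_cpow n.cast_nonneg]
    push_cast
    ring
  have hrpow : ((n:ℂ)) ^ (s:ℂ) = (((n:ℝ) ^ s : ℝ) : ℂ) := by
    rw [show ((n:ℂ)) = (((n:ℝ):ℂ)) by push_cast; ring,
      ← Complex.ofReal_cpow (Nat.cast_nonneg n)]
  apply Complex.ofReal_injective
  rw [hGS, h, hbeta, hrpow]
  push_cast
  ring

lemma stmt7_beta_tendsto {s : ℝ} (hs : 0 < s) :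
    Tendsto (fun n : ℕ => (n : ℝ) ^ s * ∫ x in (0:ℝ)..1, x ^ (s - 1) * (1 - x) ^ n)
      atTop (𝓝 (Real.Gamma s)) := by
  have := Real.GammaSeq_tendsto_Gamma s
  apply this.congr
  intro n
  exact stmt7_beta_eq hs n

lemma stmt7_beta_cut {s : ℝ} (hs : 0 < s) (hs1 : s < 1) {b : ℝ} (hb0 : 0 < b) (hb1 : b < 1) :
    Tendsto (fun n : ℕ => (n : ℝ) ^ s * ∫ x in (0:ℝ)..b, x ^ (s - 1) * (1 - x) ^ n)
      atTop (𝓝 (Real.Gamma s)) := by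
  have hsplit : ∀ n : ℕ, (n : ℝ) ^ s * ∫ x in (0:ℝ)..b, x ^ (s - 1) * (1 - x) ^ n
      = ((n : ℝ) ^ s * ∫ x in (0:ℝ)..1, x ^ (s - 1) * (1 - x) ^ n)
        - ((n : ℝ) ^ s * ∫ x in b..1, x ^ (s - 1) * (1 - x) ^ n) := by
    intro n
    rw [← mul_sub]
    congr 1
    rw [← intervalIntegral.integral_add_adjacent_intervals
      (stmt7_W_integrable hs n le_rfl hb1.le hb0.le)
      (stmt7_W_integrable hs n hb0.le le_rfl hb1.le)]
    ring
  simp only [hsplit]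
  have h0 : Tendsto (fun n : ℕ => (n : ℝ) ^ s * ∫ x in b..1, x ^ (s - 1) * (1 - x) ^ n)
      atTop (𝓝 0) := by
    have hupper : ∀ n : ℕ, 1 ≤ n → ((n : ℝ) ^ s * ∫ x in b..1, x ^ (s - 1) * (1 - x) ^ n)
        ≤ (n : ℝ) * ((1 - b) ^ n) * (b ^ (s-1)) := by
      intro n hn
      have hnR : (1:ℝ) ≤ (n:ℝ) := by exact_mod_cast hn
      have hIb : (∫ x in b..1, x ^ (s - 1) * (1 - x) ^ n) ≤ (1 - b) * (b ^ (s-1) * (1-b)^n) := by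
        have h := intervalIntegral.integral_mono_on (μ := volume) hb1.le
            (stmt7_W_integrable hs n hb0.le le_rfl hb1.le)
            (_root_.intervalIntegrable_const (c := b ^ (s-1) * (1-b)^n)) ?_
        · rw [intervalIntegral.integral_const, smul_eq_mul] at h
          exact h
        · intro x hx
          have hx0 : 0 < x := lt_of_lt_of_le hb0 hx.1
          apply mul_le_mul
          · exact Real.rpow_le_rpow_of_nonpos hb0 hx.1 (by linarith)
          · exact pow_le_pow_left₀ (by linarith [hx.2]) (by linarith [hx.1]) n
          · exact pow_nonneg (by linarith [hx.2]) n
          · exact Real.rpow_nonneg hb0.le _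
      have hns : (n:ℝ) ^ s ≤ (n:ℝ) := by
        calc (n:ℝ) ^ s ≤ (n:ℝ) ^ (1:ℝ) :=
          Real.rpow_le_rpow_of_exponent_le hnR hs1.le
        _ = (n:ℝ) := Real.rpow_one _
      have hInn : 0 ≤ ∫ x in b..1, x ^ (s - 1) * (1 - x) ^ n := by
        apply intervalIntegral.integral_nonneg hb1.le
        intro x hx
        have hx0 : 0 < x := lt_of_lt_of_le hb0 hx.1
        have := Real.rpow_nonneg hx0.le (s-1)
        nlinarith [pow_nonneg (by linarith [hx.2] : (0:ℝ) ≤ 1 - x) n]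
      have hX : (1-b) * (b^(s-1)*(1-b)^n) ≤ (1-b)^n * b^(s-1) := by
        have h1b : 0 ≤ (1-b)^n := pow_nonneg (by linarith) n
        have hb' : 0 ≤ b ^ (s-1) := Real.rpow_nonneg hb0.le _
        nlinarith
      calc ((n : ℝ) ^ s * ∫ x in b..1, x ^ (s - 1) * (1 - x) ^ n)
          ≤ (n:ℝ) * ∫ x in b..1, x ^ (s - 1) * (1 - x) ^ n :=
            mul_le_mul_of_nonneg_right hns hInn
        _ ≤ (n:ℝ) * ((1 - b) * (b ^ (s-1) * (1-b)^n)) :=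
            mul_le_mul_of_nonneg_left hIb (by linarith)
        _ ≤ (n:ℝ) * ((1-b)^n * b^(s-1)) :=
            mul_le_mul_of_nonneg_left hX (by linarith)
        _ = (n : ℝ) * ((1 - b) ^ n) * (b ^ (s-1)) := by ring
    have hlow : ∀ n : ℕ, 1 ≤ n → 0 ≤ (n : ℝ) ^ s * ∫ x in b..1, x ^ (s - 1) * (1 - x) ^ n := by
      intro n hn
      apply mul_nonneg (Real.rpow_nonneg (Nat.cast_nonneg n) s)
      apply intervalIntegral.integral_nonneg hb1.le
      intro x hx
      have hx0 : 0 < x := lt_of_lt_of_le hb0 hx.1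
      have := Real.rpow_nonneg hx0.le (s-1)
      nlinarith [pow_nonneg (by linarith [hx.2] : (0:ℝ) ≤ 1 - x) n]
    have hmaj : Tendsto (fun n : ℕ => (n : ℝ) * ((1 - b) ^ n) * (b ^ (s-1))) atTop (𝓝 0) := by
      have := tendsto_pow_const_mul_const_pow_of_lt_one 1 (by linarith : (0:ℝ) ≤ 1 - b)
        (by linarith : (1:ℝ) - b < 1)
      simpa using this.mul_const (b ^ (s-1))
    apply tendsto_of_tendsto_of_tendsto_of_le_of_le' tendsto_const_nhds hmaj
    · filter_upwards [eventually_ge_atTop 1] with n hn using hlow n hn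
    · filter_upwards [eventually_ge_atTop 1] with n hn using hupper n hn
  simpa using (stmt7_beta_tendsto hs).sub h0

lemma stmt7_subst {lam c : ℝ} (hlam : 1 < lam) (hc : 0 < c) (n : ℕ)
    {A B : ℝ} (hA : 0 < A) (hAB : A ≤ B) :
    (∫ x in A..B, (c * x ^ (-lam)) * (1 - c * x ^ (-lam)) ^ n)
      = (c ^ (1/lam) * lam⁻¹) *
        ∫ u in (c * B ^ (-lam))..(c * A ^ (-lam)), u ^ (-(1/lam)) * (1 - u) ^ n := by
  have hlam0 : (0:ℝ) < lam := by linarith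
  set K : ℝ := c ^ (1/lam) * lam⁻¹ with hK
  set f : ℝ → ℝ := fun x => c * x ^ (-lam) with hf
  set f' : ℝ → ℝ := fun x => c * (-lam * x ^ (-lam - 1)) with hf'
  set g : ℝ → ℝ := fun u => -K * (u ^ (-(1/lam)) * (1 - u) ^ n) with hg
  have huIcc : uIcc A B = Icc A B := uIcc_of_le hAB
  have hmem : ∀ x ∈ uIcc A B, 0 < x := by
    intro x hx; rw [huIcc] at hx; exact lt_of_lt_of_le hA hx.1
  have hderiv : ∀ x ∈ uIcc A B, HasDerivAt f (f' x) x := by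
    intro x hx
    exact (Real.hasDerivAt_rpow_const (Or.inl (hmem x hx).ne')).const_mul c
  have hcontf' : ContinuousOn f' (uIcc A B) := by
    apply continuousOn_const.mul
    apply continuousOn_const.mul
    exact fun x hx => ((Real.continuousAt_rpow_const x _ (Or.inl (hmem x hx).ne')).continuousWithinAt)
  have hgcont : ContinuousOn g (f '' uIcc A B) := by
    have hsub : f '' uIcc A B ⊆ Ioi 0 := by
      rintro - ⟨x, hx, rfl⟩
      exact mul_pos hc (Real.rpow_pos_of_pos (hmem x hx) _)
    apply ContinuousOn.mono ?_ hsub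
    apply continuousOn_const.mul
    apply ContinuousOn.mul
    · exact fun u hu => ((Real.continuousAt_rpow_const u _ (Or.inl (ne_of_gt hu))).continuousWithinAt)
    · exact (Continuous.continuousOn (by continuity))
  have key : ∀ x ∈ uIcc A B, f x * (1 - f x) ^ n = f' x • (g ∘ f) x := by
    intro x hx
    have hx0 : 0 < x := hmem x hx
    have h1 : (c * x ^ (-lam)) ^ (-(1/lam)) = c ^ (-(1/lam)) * x := by
      rw [Real.mul_rpow hc.le (Real.rpow_nonneg hx0.le _), ← Real.rpow_mul hx0.le]
      rw [show (-lam) * (-(1/lam)) = 1 by field_simp, Real.rpow_one]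
    have e1 : c ^ (1/lam) * c ^ (-(1/lam)) = 1 := by
      rw [← Real.rpow_add hc]; norm_num
    have e2 : x ^ (-lam - 1) * x = x ^ (-lam) := by
      nth_rewrite 2 [← Real.rpow_one x]
      rw [← Real.rpow_add hx0]; norm_num
    have elam : lam * lam⁻¹ = 1 := mul_inv_cancel₀ (ne_of_gt hlam0)
    simp only [smul_eq_mul, Function.comp_apply, hf, hf', hg, hK, h1]
    calc c * x ^ (-lam) * (1 - c * x ^ (-lam)) ^ n
        = (lam * lam⁻¹) * (c^(1/lam) * c^(-(1/lam))) * (c * (x^(-lam-1) * x)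
            * (1 - c * x ^ (-lam)) ^ n) := by rw [e1, e2, elam]; ring
      _ = c * (-lam * x ^ (-lam - 1)) *
          (-(c ^ (1/lam) * lam⁻¹) * ((c ^ (-(1/lam)) * x) * (1 - c * x ^ (-lam)) ^ n)) := by
          ring
  have hcongr : (∫ x in A..B, (c * x ^ (-lam)) * (1 - c * x ^ (-lam)) ^ n)
      = ∫ x in A..B, f' x • (g ∘ f) x := by
    apply intervalIntegral.integral_congr
    intro x hx
    exact key x hx
  rw [hcongr, intervalIntegral.integral_comp_smul_deriv' hderiv hcontf' hgcont]
  have : (∫ u in f A..f B, g u)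
      = -K * ∫ u in f A..f B, u ^ (-(1/lam)) * (1 - u) ^ n := by
    rw [← intervalIntegral.integral_const_mul]
  rw [this, intervalIntegral.integral_symm (f B) (f A)]
  simp only [hf]
  ring

noncomputable def s7q (lam c x : ℝ) : ℝ := c * x ^ (-lam)
noncomputable def s7G (lam c : ℝ) (n : ℕ) (x : ℝ) : ℝ := s7q lam c x * (1 - s7q lam c x) ^ n
noncomputable def s7W (lam : ℝ) (n : ℕ) (u : ℝ) : ℝ := u ^ (-(1/lam)) * (1 - u) ^ n

lemma s7q_pos {lam c : ℝ} (hc : 0 < c) {x : ℝ} (hx : 0 < x) : 0 < s7q lam c x :=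
  mul_pos hc (Real.rpow_pos_of_pos hx _)

lemma s7q_anti {lam c : ℝ} (hlam : 0 ≤ lam) (hc : 0 < c) {x y : ℝ} (hx : 0 < x)
    (hxy : x ≤ y) : s7q lam c y ≤ s7q lam c x :=
  mul_le_mul_of_nonneg_left
    (Real.rpow_le_rpow_of_nonpos hx hxy (by simp only [neg_nonpos]; linarith)) hc.le

lemma s7_subst {lam c : ℝ} (hlam : 1 < lam) (hc : 0 < c) (n : ℕ) {A B : ℝ} (hA : 0 < A) (hAB : A ≤ B) :
    (∫ x in A..B, s7G lam c n x)
      = (c ^ (1/lam) * lam⁻¹) * ∫ u in (s7q lam c B)..(s7q lam c A), s7W lam n u := by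
  simpa only [s7G, s7q, s7W] using stmt7_subst hlam hc n hA hAB

lemma s7W_int {lam : ℝ} (hlam : 1 < lam) (n : ℕ) {a b : ℝ} (ha : 0 ≤ a) (hb : b ≤ 1) (hab : a ≤ b) :
    IntervalIntegrable (s7W lam n) volume a b := by
  have h := stmt7_W_integrable (s := 1 - 1/lam)
    (by have : 1/lam < 1 := by rw [div_lt_one (by linarith)]; linarith
        linarith) n ha hb hab
  simp only [show (1 - 1/lam - 1 : ℝ) = -(1/lam) by ring] at h
  exact h

lemma s7G_int {lam c : ℝ} (n : ℕ) {A B : ℝ} (hA : 0 < A) (hB : 0 < B) :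
    IntervalIntegrable (s7G lam c n) volume A B := by
  have hqc : ContinuousOn (s7q lam c) {x : ℝ | 0 < x} := by
    apply continuousOn_const.mul
    exact fun x hx => (Real.continuousAt_rpow_const x _ (Or.inl (ne_of_gt hx))).continuousWithinAt
  have hGcont : ContinuousOn (s7G lam c n) {x : ℝ | 0 < x} :=
    hqc.mul ((continuousOn_const.sub hqc).pow n)
  apply (hGcont.mono ?_).intervalIntegrable
  intro x hx
  simp only [mem_setOf_eq]
  calc (0:ℝ) < min A B := lt_min hA hB
    _ ≤ x := hx.1

lemma stmt7_core {lam c : ℝ} (hlam : 1 < lam) (hc : 0 < c) {k₀ : ℕ} (hk₀ : 1 ≤ k₀)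
    (hp₀1 : s7q lam c (k₀:ℝ) < 1) {n : ℕ} (hn : 1 ≤ n) :
    ((c ^ (1/lam) * lam⁻¹) * (∫ u in (0:ℝ)..(s7q lam c (k₀:ℝ)), s7W lam n u)
        - 1 / (Real.exp 1 * n) ≤ ∑' i : ℕ, s7G lam c n ((k₀+i : ℕ) : ℝ))
    ∧ (∑' i : ℕ, s7G lam c n ((k₀+i:ℕ):ℝ)
      ≤ (c ^ (1/lam) * lam⁻¹) * (∫ u in (0:ℝ)..(s7q lam c (k₀:ℝ)), s7W lam n u)
        + 2 * (1 / (Real.exp 1 * n))) := by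
  have hlam0 : (0:ℝ) < lam := by linarith
  have hs0 : 0 < 1/lam := by positivity
  have hs1 : 1/lam < 1 := by rw [div_lt_one hlam0]; linarith
  have hk₀R : (1:ℝ) ≤ (k₀:ℝ) := by exact_mod_cast hk₀
  have hk₀pos : (0:ℝ) < (k₀:ℝ) := by linarith
  have hp₀pos : 0 < s7q lam c (k₀:ℝ) := s7q_pos hc hk₀pos
  have hVpos : 0 < 1 / (Real.exp 1 * n) := by
    have := Real.exp_pos (1:ℝ)
    have hnR : (0:ℝ) < n := by exact_mod_cast hn
    positivity
  have hKpos : 0 < c ^ (1/lam) * lam⁻¹ := by positivity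
  have hcn : (0:ℝ) < c * ((n:ℝ)+1) := by positivity
  set θ : ℝ := (c * ((n:ℝ)+1)) ^ (1/lam) with hθdef
  have hθpos : 0 < θ := Real.rpow_pos_of_pos hcn _
  have hqθ : s7q lam c θ = 1/((n:ℝ)+1) := by
    simp only [s7q, hθdef]
    rw [← Real.rpow_mul hcn.le, show (1/lam) * (-lam) = -1 by field_simp, Real.rpow_neg_one]
    field_simp
  set M₁ : ℕ := max k₀ ⌊θ⌋₊ with hM₁def
  have hk₀M₁ : k₀ ≤ M₁ := le_max_left _ _
  have hk₀M₁R : (k₀:ℝ) ≤ (M₁:ℝ) := by exact_mod_cast hk₀M₁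
  have hM₁pos : (0:ℝ) < (M₁:ℝ) := lt_of_lt_of_le hk₀pos hk₀M₁R
  have hθM₂ : θ ≤ ((M₁+1:ℕ):ℝ) := by
    have h1 := Nat.lt_floor_add_one θ
    have h2 : (⌊θ⌋₊:ℝ) ≤ (M₁:ℝ) := by exact_mod_cast le_max_right k₀ ⌊θ⌋₊
    push_cast
    push_cast at h1
    linarith
  have hM₂pos : (0:ℝ) < ((M₁+1:ℕ):ℝ) := by positivity
  -- pointwise facts
  have hq1 : ∀ x : ℝ, (k₀:ℝ) ≤ x → s7q lam c x ≤ s7q lam c (k₀:ℝ) :=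
    fun x hx => s7q_anti hlam0.le hc hk₀pos hx
  have hGV : ∀ x : ℝ, (k₀:ℝ) ≤ x → s7G lam c n x ≤ 1 / (Real.exp 1 * n) := by
    intro x hx
    have hx0 : (0:ℝ) < x := lt_of_lt_of_le hk₀pos hx
    exact stmt7_hV n hn (s7q_pos hc hx0).le (le_trans (hq1 x hx) hp₀1.le)
  have hGnonneg : ∀ x : ℝ, (k₀:ℝ) ≤ x → 0 ≤ s7G lam c n x := by
    intro x hx
    have hx0 : (0:ℝ) < x := lt_of_lt_of_le hk₀pos hx
    have h1 : s7q lam c x ≤ 1 := le_trans (hq1 x hx) hp₀1.le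
    exact mul_nonneg (s7q_pos hc hx0).le (pow_nonneg (by linarith) n)
  have hcast : ∀ i : ℕ, (k₀:ℝ) ≤ ((k₀+i:ℕ):ℝ) := by
    intro i; push_cast; linarith [(Nat.cast_nonneg i : (0:ℝ) ≤ i)]
  -- monotonicity on [k₀, M₁]
  have hmonoG : MonotoneOn (s7G lam c n) (Icc (k₀:ℝ) (M₁:ℝ)) := by
    rcases le_or_gt ⌊θ⌋₊ k₀ with hcase | hcase
    · have hM₁k : M₁ = k₀ := by rw [hM₁def]; exact max_eq_left hcase
      intro x hx y hy hxy
      have hx' : x = (k₀:ℝ) := le_antisymm (by rw [hM₁k] at hx; exact hx.2) hx.1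
      have hy' : y = (k₀:ℝ) := le_antisymm (by rw [hM₁k] at hy; exact hy.2) hy.1
      rw [hx', hy']
    · have hM₁f : M₁ = ⌊θ⌋₊ := by rw [hM₁def]; exact max_eq_right hcase.le
      have hM₁θ : (M₁:ℝ) ≤ θ := by rw [hM₁f]; exact_mod_cast Nat.floor_le hθpos.le
      intro x hx y hy hxy
      have hx0 : (0:ℝ) < x := lt_of_lt_of_le hk₀pos hx.1
      have hy0 : (0:ℝ) < y := lt_of_lt_of_le hk₀pos hy.1
      have hqyl : 1/((n:ℝ)+1) ≤ s7q lam c y := by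
        rw [← hqθ]
        exact s7q_anti hlam0.le hc hy0 (le_trans hy.2 hM₁θ)
      have hqxl : 1/((n:ℝ)+1) ≤ s7q lam c x := by
        rw [← hqθ]
        exact s7q_anti hlam0.le hc hx0 (le_trans hx.2 hM₁θ)
      have hqxu : s7q lam c x ≤ 1 := le_trans (hq1 x hx.1) hp₀1.le
      have hqyu : s7q lam c y ≤ 1 := le_trans (hq1 y hy.1) hp₀1.le
      have := stmt7_anti n hn (a := s7q lam c y) (b := s7q lam c x)
        ⟨by exact_mod_cast hqyl, hqyu⟩ ⟨by exact_mod_cast hqxl, hqxu⟩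
        (s7q_anti hlam0.le hc hx0 hxy)
      exact this
  -- antitonicity on [M₁+1, b]
  have hantiG : ∀ b : ℝ, AntitoneOn (s7G lam c n) (Icc ((M₁+1:ℕ):ℝ) b) := by
    intro b x hx y hy hxy
    have hx0 : (0:ℝ) < x := lt_of_lt_of_le hM₂pos hx.1
    have hy0 : (0:ℝ) < y := lt_of_lt_of_le hM₂pos hy.1
    have hqxu : s7q lam c x ≤ 1/((n:ℝ)+1) := by
      rw [← hqθ]
      exact s7q_anti hlam0.le hc hθpos (le_trans hθM₂ hx.1)
    have hqyu : s7q lam c y ≤ 1/((n:ℝ)+1) := by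
      rw [← hqθ]
      exact s7q_anti hlam0.le hc hθpos (le_trans hθM₂ hy.1)
    have := stmt7_mono n (a := s7q lam c y) (b := s7q lam c x)
      ⟨(s7q_pos hc hy0).le, by exact_mod_cast hqyu⟩
      ⟨(s7q_pos hc hx0).le, by exact_mod_cast hqxu⟩
      (s7q_anti hlam0.le hc hx0 hxy)
    exact this
  -- summability
  have hsumG : Summable (fun i : ℕ => s7G lam c n ((k₀+i:ℕ):ℝ)) := by
    have hbase : Summable (fun k : ℕ => c * (k:ℝ)^(-lam)) :=
      (Real.summable_nat_rpow.mpr (by linarith)).mul_left c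
    have hshift : Summable (fun i : ℕ => c * ((k₀+i:ℕ):ℝ)^(-lam)) := by
      have h2 := (_root_.summable_nat_add_iff
        (f := fun k : ℕ => c * (k:ℝ)^(-lam)) k₀).mpr hbase
      apply h2.congr
      intro i
      simp only [add_comm i k₀]
    apply Summable.of_nonneg_of_le (fun i => hGnonneg _ (hcast i)) ?_ hshift
    intro i
    have hx0 : (0:ℝ) < ((k₀+i:ℕ):ℝ) := lt_of_lt_of_le hk₀pos (hcast i)
    have h1 : s7q lam c ((k₀+i:ℕ):ℝ) ≤ 1 := le_trans (hq1 _ (hcast i)) hp₀1.le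
    have h0 : 0 ≤ s7q lam c ((k₀+i:ℕ):ℝ) := (s7q_pos hc hx0).le
    have hp : (1 - s7q lam c ((k₀+i:ℕ):ℝ))^n ≤ 1 :=
      pow_le_one₀ (by linarith) (by linarith)
    calc s7G lam c n ((k₀+i:ℕ):ℝ) ≤ s7q lam c ((k₀+i:ℕ):ℝ) * 1 :=
          mul_le_mul_of_nonneg_left hp h0
      _ = c * ((k₀+i:ℕ):ℝ)^(-lam) := by rw [mul_one]; rfl
  -- UPPER BOUND
  have upper : (∑' i : ℕ, s7G lam c n ((k₀+i:ℕ):ℝ))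
      ≤ (c ^ (1/lam) * lam⁻¹) * (∫ u in (0:ℝ)..(s7q lam c (k₀:ℝ)), s7W lam n u)
        + 2 * (1 / (Real.exp 1 * n)) := by
    apply Real.tsum_le_of_sum_range_le (fun i => hGnonneg _ (hcast i))
    intro N
    set N' : ℕ := N + (M₁ + 2 - k₀) with hN'def
    have hEnd : M₁ + 2 ≤ k₀ + N' := by omega
    have hpad : (∑ i ∈ Finset.range N, s7G lam c n ((k₀+i:ℕ):ℝ))
        ≤ ∑ i ∈ Finset.range N', s7G lam c n ((k₀+i:ℕ):ℝ) :=
      Finset.sum_le_sum_of_subset_of_nonneg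
        (Finset.range_subset_range.mpr (by omega)) (fun i _ _ => hGnonneg _ (hcast i))
    have hIco : (∑ i ∈ Finset.range N', s7G lam c n ((k₀+i:ℕ):ℝ))
        = ∑ k ∈ Finset.Ico k₀ (k₀+N'), s7G lam c n (k:ℝ) := by
      rw [Finset.sum_Ico_eq_sum_range]
      simp only [add_tsub_cancel_left]
    have hsplit : (∑ k ∈ Finset.Ico k₀ (k₀+N'), s7G lam c n (k:ℝ))
        = (∑ k ∈ Finset.Ico k₀ M₁, s7G lam c n (k:ℝ))
          + ((∑ k ∈ Finset.Ico M₁ (M₁+2), s7G lam c n (k:ℝ))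
          + ∑ k ∈ Finset.Ico (M₁+2) (k₀+N'), s7G lam c n (k:ℝ)) := by
      rw [Finset.sum_Ico_consecutive _ (by omega : M₁ ≤ M₁+2) hEnd,
          Finset.sum_Ico_consecutive _ hk₀M₁ (by omega : M₁ ≤ k₀+N')]
    have hb1 : (∑ k ∈ Finset.Ico k₀ M₁, s7G lam c n (k:ℝ))
        ≤ ∫ x in (k₀:ℝ)..(M₁:ℝ), s7G lam c n x :=
      MonotoneOn.sum_le_integral_Ico hk₀M₁ hmonoG
    have hb2 : (∑ k ∈ Finset.Ico M₁ (M₁+2), s7G lam c n (k:ℝ))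
        ≤ 2 * (1/(Real.exp 1 * n)) := by
      rw [Finset.sum_Ico_eq_sum_range]
      simp only [add_tsub_cancel_left]
      rw [Finset.sum_range_succ, Finset.sum_range_one]
      have g1 : s7G lam c n ((M₁:ℕ):ℝ) ≤ 1/(Real.exp 1 * n) := hGV _ hk₀M₁R
      have g2 : s7G lam c n ((M₁+1:ℕ):ℝ) ≤ 1/(Real.exp 1 * n) := by
        apply hGV
        push_cast
        linarith
      simp only [Nat.add_zero]
      linarith
    have hb3 : (∑ k ∈ Finset.Ico (M₁+2) (k₀+N'), s7G lam c n (k:ℝ))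
        ≤ ∫ x in ((M₁+1:ℕ):ℝ)..((M₁+1+N':ℕ):ℝ), s7G lam c n x := by
      have hsub1 : (∑ k ∈ Finset.Ico (M₁+2) (k₀+N'), s7G lam c n (k:ℝ))
          ≤ ∑ k ∈ Finset.Ico (M₁+2) (M₁+2+N'), s7G lam c n (k:ℝ) := by
        apply Finset.sum_le_sum_of_subset_of_nonneg
          (Finset.Ico_subset_Ico le_rfl (by omega))
        intro k hk _
        apply hGnonneg
        have hk2 : M₁ + 2 ≤ k := (Finset.mem_Ico.mp hk).1
        have : k₀ ≤ k := by omega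
        exact_mod_cast this
      have hshift : (∑ k ∈ Finset.Ico (M₁+2) (M₁+2+N'), s7G lam c n (k:ℝ))
          = ∑ k ∈ Finset.Ico (M₁+1) (M₁+1+N'), s7G lam c n ((k+1:ℕ):ℝ) := by
        rw [Finset.sum_Ico_eq_sum_range, Finset.sum_Ico_eq_sum_range]
        simp only [add_tsub_cancel_left]
        refine Finset.sum_congr rfl fun i _ => ?_
        congr 1
        push_cast
        ring
      have hanti := AntitoneOn.sum_le_integral_Ico
        (by omega : M₁+1 ≤ M₁+1+N') (hantiG ((M₁+1+N':ℕ):ℝ))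
      calc (∑ k ∈ Finset.Ico (M₁+2) (k₀+N'), s7G lam c n (k:ℝ))
          ≤ ∑ k ∈ Finset.Ico (M₁+2) (M₁+2+N'), s7G lam c n (k:ℝ) := hsub1
        _ = ∑ k ∈ Finset.Ico (M₁+1) (M₁+1+N'), s7G lam c n ((k+1:ℕ):ℝ) := hshift
        _ ≤ _ := hanti
    -- u-space
    have hMN'R : ((M₁+1:ℕ):ℝ) ≤ ((M₁+1+N':ℕ):ℝ) := by
      exact_mod_cast Nat.le_add_right _ _
    have hBpos : (0:ℝ) < ((M₁+1+N':ℕ):ℝ) := lt_of_lt_of_le hM₂pos hMN'R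
    have e1 := s7_subst hlam hc n hk₀pos hk₀M₁R
    have e2 := s7_subst hlam hc n hM₂pos hMN'R
    have hqM₁1 : s7q lam c (M₁:ℝ) ≤ 1 := le_trans (hq1 _ hk₀M₁R) hp₀1.le
    have hqM₁0 : 0 < s7q lam c (M₁:ℝ) := s7q_pos hc hM₁pos
    have hordBk : s7q lam c ((M₁+1+N':ℕ):ℝ) ≤ s7q lam c ((M₁+1:ℕ):ℝ) :=
      s7q_anti hlam0.le hc hM₂pos hMN'R
    have hordM₂M₁ : s7q lam c ((M₁+1:ℕ):ℝ) ≤ s7q lam c (M₁:ℝ) :=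
      s7q_anti hlam0.le hc hM₁pos (by push_cast; linarith)
    have hordM₁k₀ : s7q lam c (M₁:ℝ) ≤ s7q lam c (k₀:ℝ) := hq1 _ hk₀M₁R
    have hqB0 : 0 < s7q lam c ((M₁+1+N':ℕ):ℝ) := s7q_pos hc hBpos
    have hWadd : (∫ u in (0:ℝ)..(s7q lam c (M₁:ℝ)), s7W lam n u)
        + (∫ u in (s7q lam c (M₁:ℝ))..(s7q lam c (k₀:ℝ)), s7W lam n u)
        = ∫ u in (0:ℝ)..(s7q lam c (k₀:ℝ)), s7W lam n u :=
      integral_add_adjacent_intervals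
        (s7W_int hlam n le_rfl hqM₁1 hqM₁0.le)
        (s7W_int hlam n hqM₁0.le hp₀1.le hordM₁k₀)
    have hWmono : (∫ u in (s7q lam c ((M₁+1+N':ℕ):ℝ))..(s7q lam c ((M₁+1:ℕ):ℝ)), s7W lam n u)
        ≤ ∫ u in (0:ℝ)..(s7q lam c (M₁:ℝ)), s7W lam n u := by
      apply intervalIntegral.integral_mono_interval hqB0.le hordBk hordM₂M₁
        ?_ (s7W_int hlam n le_rfl hqM₁1 hqM₁0.le)
      rw [Filter.EventuallyLE, ae_restrict_iff' measurableSet_Ioc]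
      filter_upwards with u hu
      have hu1 : u ≤ 1 := le_trans hu.2 hqM₁1
      exact mul_nonneg (Real.rpow_nonneg hu.1.le _) (pow_nonneg (by linarith) n)
    have hKI : (∫ x in (k₀:ℝ)..(M₁:ℝ), s7G lam c n x)
        + (∫ x in ((M₁+1:ℕ):ℝ)..((M₁+1+N':ℕ):ℝ), s7G lam c n x)
        ≤ (c ^ (1/lam) * lam⁻¹) * ∫ u in (0:ℝ)..(s7q lam c (k₀:ℝ)), s7W lam n u := by
      rw [e1, e2, ← mul_add]
      apply mul_le_mul_of_nonneg_left ?_ hKpos.le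
      linarith [hWmono, hWadd]
    calc (∑ i ∈ Finset.range N, s7G lam c n ((k₀+i:ℕ):ℝ))
        ≤ ∑ i ∈ Finset.range N', s7G lam c n ((k₀+i:ℕ):ℝ) := hpad
      _ = ∑ k ∈ Finset.Ico k₀ (k₀+N'), s7G lam c n (k:ℝ) := hIco
      _ = _ := hsplit
      _ ≤ (∫ x in (k₀:ℝ)..(M₁:ℝ), s7G lam c n x)
          + ((2 * (1/(Real.exp 1 * n)))
          + ∫ x in ((M₁+1:ℕ):ℝ)..((M₁+1+N':ℕ):ℝ), s7G lam c n x) :=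
        add_le_add hb1 (add_le_add hb2 hb3)
      _ ≤ (c ^ (1/lam) * lam⁻¹) * (∫ u in (0:ℝ)..(s7q lam c (k₀:ℝ)), s7W lam n u)
          + 2 * (1/(Real.exp 1 * n)) := by linarith [hKI]
  -- LOWER BOUND
  have lower : (c ^ (1/lam) * lam⁻¹) * (∫ u in (0:ℝ)..(s7q lam c (k₀:ℝ)), s7W lam n u)
      - 1 / (Real.exp 1 * n) ≤ ∑' i : ℕ, s7G lam c n ((k₀+i:ℕ):ℝ) := by
    have hineq : ∀ N : ℕ,
        (c ^ (1/lam) * lam⁻¹) * (∫ u in (0:ℝ)..(s7q lam c (k₀:ℝ)), s7W lam n u)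
        ≤ (∑' i : ℕ, s7G lam c n ((k₀+i:ℕ):ℝ)) + 1/(Real.exp 1 * n)
          + (c ^ (1/lam) * lam⁻¹)
            * ((s7q lam c ((M₁+1+N:ℕ):ℝ)) ^ (1-1/lam) / (1-1/lam)) := by
      intro N
      have hBR : ((M₁+1:ℕ):ℝ) ≤ ((M₁+1+N:ℕ):ℝ) := by exact_mod_cast Nat.le_add_right _ _
      have hBpos : (0:ℝ) < ((M₁+1+N:ℕ):ℝ) := lt_of_lt_of_le hM₂pos hBR
      have hqB0 : 0 < s7q lam c ((M₁+1+N:ℕ):ℝ) := s7q_pos hc hBpos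
      have hk₀B : (k₀:ℝ) ≤ ((M₁+1+N:ℕ):ℝ) := by
        exact_mod_cast (by omega : k₀ ≤ M₁+1+N)
      have hqB1 : s7q lam c ((M₁+1+N:ℕ):ℝ) ≤ 1 := le_trans (hq1 _ hk₀B) hp₀1.le
      have hadj : (∫ x in (k₀:ℝ)..((M₁+1+N:ℕ):ℝ), s7G lam c n x)
          = (∫ x in (k₀:ℝ)..(M₁:ℝ), s7G lam c n x)
            + ((∫ x in (M₁:ℝ)..((M₁+1:ℕ):ℝ), s7G lam c n x)
            + ∫ x in ((M₁+1:ℕ):ℝ)..((M₁+1+N:ℕ):ℝ), s7G lam c n x) := by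
        rw [integral_add_adjacent_intervals (s7G_int n hM₁pos hM₂pos)
              (s7G_int n hM₂pos hBpos),
            integral_add_adjacent_intervals (s7G_int n hk₀pos hM₁pos)
              (s7G_int n hM₁pos hBpos)]
      have i1 : (∫ x in (k₀:ℝ)..(M₁:ℝ), s7G lam c n x)
          ≤ ∑ k ∈ Finset.Ico k₀ M₁, s7G lam c n ((k+1:ℕ):ℝ) :=
        MonotoneOn.integral_le_sum_Ico hk₀M₁ hmonoG
      have i1' : (∑ k ∈ Finset.Ico k₀ M₁, s7G lam c n ((k+1:ℕ):ℝ))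
          = ∑ k ∈ Finset.Ico (k₀+1) (M₁+1), s7G lam c n (k:ℝ) := by
        rw [Finset.sum_Ico_eq_sum_range, Finset.sum_Ico_eq_sum_range]
        rw [show M₁+1-(k₀+1) = M₁-k₀ from by omega]
        refine Finset.sum_congr rfl fun i _ => ?_
        congr 1
        push_cast
        ring
      have i2 : (∫ x in (M₁:ℝ)..((M₁+1:ℕ):ℝ), s7G lam c n x) ≤ 1/(Real.exp 1 * n) := by
        have h := intervalIntegral.integral_mono_on (μ := volume)
          (by push_cast; linarith : (M₁:ℝ) ≤ ((M₁+1:ℕ):ℝ))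
          (s7G_int n hM₁pos hM₂pos) intervalIntegrable_const
          (fun x hx => hGV x (le_trans hk₀M₁R hx.1))
        rw [intervalIntegral.integral_const, smul_eq_mul] at h
        calc (∫ x in (M₁:ℝ)..((M₁+1:ℕ):ℝ), s7G lam c n x)
            ≤ (((M₁+1:ℕ):ℝ) - (M₁:ℝ)) * (1/(Real.exp 1 * n)) := h
          _ = 1/(Real.exp 1 * n) := by push_cast; ring
      have i3 : (∫ x in ((M₁+1:ℕ):ℝ)..((M₁+1+N:ℕ):ℝ), s7G lam c n x)
          ≤ ∑ k ∈ Finset.Ico (M₁+1) (M₁+1+N), s7G lam c n (k:ℝ) :=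
        AntitoneOn.integral_le_sum_Ico (by omega) (hantiG _)
      have hsum2 : (∑ k ∈ Finset.Ico (k₀+1) (M₁+1), s7G lam c n (k:ℝ))
          + (∑ k ∈ Finset.Ico (M₁+1) (M₁+1+N), s7G lam c n (k:ℝ))
          ≤ ∑' i : ℕ, s7G lam c n ((k₀+i:ℕ):ℝ) := by
        rw [Finset.sum_Ico_consecutive _ (by omega : k₀+1 ≤ M₁+1)
          (by omega : M₁+1 ≤ M₁+1+N)]
        have hsub2 : (∑ k ∈ Finset.Ico (k₀+1) (M₁+1+N), s7G lam c n (k:ℝ))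
            ≤ ∑ k ∈ Finset.Ico k₀ (M₁+1+N), s7G lam c n (k:ℝ) := by
          apply Finset.sum_le_sum_of_subset_of_nonneg
            (Finset.Ico_subset_Ico (by omega) le_rfl)
          intro k hk _
          apply hGnonneg
          have : k₀ ≤ k := (Finset.mem_Ico.mp hk).1
          exact_mod_cast this
        calc (∑ k ∈ Finset.Ico (k₀+1) (M₁+1+N), s7G lam c n (k:ℝ))
            ≤ ∑ k ∈ Finset.Ico k₀ (M₁+1+N), s7G lam c n (k:ℝ) := hsub2
          _ = ∑ i ∈ Finset.range (M₁+1+N-k₀), s7G lam c n ((k₀+i:ℕ):ℝ) :=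
            Finset.sum_Ico_eq_sum_range _ _ _
          _ ≤ _ := Summable.sum_le_tsum _ (fun i _ => hGnonneg _ (hcast i)) hsumG
      have e3 := s7_subst hlam hc n hk₀pos hk₀B
      have htail : (∫ u in (0:ℝ)..(s7q lam c ((M₁+1+N:ℕ):ℝ)), s7W lam n u)
          ≤ (s7q lam c ((M₁+1+N:ℕ):ℝ)) ^ (1-1/lam) / (1-1/lam) := by
        have hmono2 : (∫ u in (0:ℝ)..(s7q lam c ((M₁+1+N:ℕ):ℝ)), s7W lam n u)
            ≤ ∫ u in (0:ℝ)..(s7q lam c ((M₁+1+N:ℕ):ℝ)), u^(-(1/lam)) := by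
          apply intervalIntegral.integral_mono_on hqB0.le
            (s7W_int hlam n le_rfl hqB1 hqB0.le)
            (intervalIntegral.intervalIntegrable_rpow' (by linarith))
          intro u hu
          have h1 : (1-u)^n ≤ 1 :=
            pow_le_one₀ (by linarith [hu.2, hqB1]) (by linarith [hu.1])
          calc s7W lam n u = u^(-(1/lam)) * (1-u)^n := rfl
            _ ≤ u^(-(1/lam)) * 1 :=
              mul_le_mul_of_nonneg_left h1 (Real.rpow_nonneg hu.1 _)
            _ = u^(-(1/lam)) := mul_one _
        have hrw : (∫ u in (0:ℝ)..(s7q lam c ((M₁+1+N:ℕ):ℝ)), u^(-(1/lam)))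
            = (s7q lam c ((M₁+1+N:ℕ):ℝ))^(1-1/lam)/(1-1/lam) := by
          rw [integral_rpow (Or.inl (by linarith : (-1:ℝ) < -(1/lam)))]
          rw [Real.zero_rpow (by linarith : -(1/lam)+1 ≠ 0)]
          rw [show -(1/lam)+1 = 1-1/lam from by ring]
          ring
        linarith
      have hWsplit : (∫ u in (0:ℝ)..(s7q lam c (k₀:ℝ)), s7W lam n u)
          = (∫ u in (0:ℝ)..(s7q lam c ((M₁+1+N:ℕ):ℝ)), s7W lam n u)
            + ∫ u in (s7q lam c ((M₁+1+N:ℕ):ℝ))..(s7q lam c (k₀:ℝ)), s7W lam n u := by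
        rw [integral_add_adjacent_intervals (s7W_int hlam n le_rfl hqB1 hqB0.le)
          (s7W_int hlam n hqB0.le hp₀1.le (hq1 _ hk₀B))]
      have hGB : (∫ x in (k₀:ℝ)..((M₁+1+N:ℕ):ℝ), s7G lam c n x)
          ≤ (∑' i : ℕ, s7G lam c n ((k₀+i:ℕ):ℝ)) + 1/(Real.exp 1 * n) := by
        have i1'' := i1.trans (le_of_eq i1')
        rw [hadj]
        linarith [i1'', i2, i3, hsum2]
      calc (c ^ (1/lam) * lam⁻¹) * (∫ u in (0:ℝ)..(s7q lam c (k₀:ℝ)), s7W lam n u)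
          = (c ^ (1/lam) * lam⁻¹) * (∫ u in (0:ℝ)..(s7q lam c ((M₁+1+N:ℕ):ℝ)), s7W lam n u)
            + (c ^ (1/lam) * lam⁻¹)
              * ∫ u in (s7q lam c ((M₁+1+N:ℕ):ℝ))..(s7q lam c (k₀:ℝ)), s7W lam n u := by
            rw [hWsplit]; ring
        _ ≤ (c ^ (1/lam) * lam⁻¹)
              * ((s7q lam c ((M₁+1+N:ℕ):ℝ)) ^ (1-1/lam) / (1-1/lam))
            + ((∑' i : ℕ, s7G lam c n ((k₀+i:ℕ):ℝ)) + 1/(Real.exp 1 * n)) := by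
            apply add_le_add (mul_le_mul_of_nonneg_left htail hKpos.le)
            rw [← e3]
            exact hGB
        _ = (∑' i : ℕ, s7G lam c n ((k₀+i:ℕ):ℝ)) + 1/(Real.exp 1 * n)
            + (c ^ (1/lam) * lam⁻¹)
              * ((s7q lam c ((M₁+1+N:ℕ):ℝ)) ^ (1-1/lam) / (1-1/lam)) := by ring
    have hlim : Tendsto (fun N : ℕ =>
        (∑' i : ℕ, s7G lam c n ((k₀+i:ℕ):ℝ)) + 1/(Real.exp 1 * n)
          + (c ^ (1/lam) * lam⁻¹)
            * ((s7q lam c ((M₁+1+N:ℕ):ℝ)) ^ (1-1/lam) / (1-1/lam)))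
        atTop (𝓝 ((∑' i : ℕ, s7G lam c n ((k₀+i:ℕ):ℝ)) + 1/(Real.exp 1 * n))) := by
      have h1 : Tendsto (fun N : ℕ => ((M₁+1+N:ℕ):ℝ)) atTop atTop := by
        apply tendsto_natCast_atTop_atTop.comp
        exact tendsto_atTop_mono (fun N => by simpa using Nat.le_add_left N (M₁+1)) tendsto_id
      have h2 : Tendsto (fun x : ℝ => c * x^(-lam)) atTop (𝓝 0) := by
        have := (tendsto_rpow_neg_atTop hlam0).const_mul c
        simpa using this
      have h3 : Tendsto (fun N : ℕ => s7q lam c ((M₁+1+N:ℕ):ℝ)) atTop (𝓝 0) := by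
        simpa [s7q, Function.comp_def] using h2.comp h1
      have h4 : ContinuousAt (fun t : ℝ => t ^ (1-1/lam)) 0 :=
        Real.continuousAt_rpow_const 0 _ (Or.inr (by linarith))
      have h5 : Tendsto (fun N : ℕ => (s7q lam c ((M₁+1+N:ℕ):ℝ))^(1-1/lam)) atTop (𝓝 0) := by
        have h6 := h4.tendsto.comp h3
        rw [Real.zero_rpow (by linarith : (1:ℝ)-1/lam ≠ 0)] at h6
        exact h6
      have h7 := ((h5.div_const (1-1/lam)).const_mul
        (c ^ (1/lam) * lam⁻¹)).const_add
        ((∑' i : ℕ, s7G lam c n ((k₀+i:ℕ):ℝ)) + 1/(Real.exp 1 * n))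
      simpa using h7
    have hfin := ge_of_tendsto hlim (Filter.Eventually.of_forall hineq)
    linarith
  exact ⟨lower, upper⟩

/-- If `p_k = c k^(−λ)` for all `k ≥ k₀` with `λ > 1` and `c > 0`, then
`n^(1−1/λ) ∑_k p_k (1 − p_k)^n → c^(1/λ) λ⁻¹ Γ(1 − 1/λ) > 0`;
consequently `t_n` grows at the rate `n^(1/λ)`. -/
theorem stmt7 (p : ℕ → ℝ) (hp : ∀ k, 0 ≤ p k) (hsum : ∑' k, p k = 1)
    (lam c : ℝ) (hlam : 1 < lam) (hc : 0 < c) (k₀ : ℕ) (hk₀ : 1 ≤ k₀)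
    (hform : ∀ k : ℕ, k₀ ≤ k → p k = c * (k : ℝ) ^ (-lam)) :
    Tendsto (fun n : ℕ => (n : ℝ) ^ ((1 : ℝ) - 1 / lam) * ∑' k, p k * (1 - p k) ^ n)
        atTop (𝓝 (c ^ (1 / lam) * lam⁻¹ * Real.Gamma (1 - 1 / lam))) ∧
      0 < c ^ (1 / lam) * lam⁻¹ * Real.Gamma (1 - 1 / lam) := by
  have hlam0 : (0:ℝ) < lam := by linarith
  have hs0 : 0 < 1/lam := by positivity
  have hs1 : 1/lam < 1 := by rw [div_lt_one hlam0]; linarith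
  have hGam : 0 < Real.Gamma (1 - 1/lam) := Real.Gamma_pos_of_pos (by linarith)
  have hKpos : 0 < c ^ (1/lam) * lam⁻¹ := by positivity
  refine ⟨?_, by positivity⟩
  -- summability of p
  have hP : Summable p := by
    by_contra h
    rw [tsum_eq_zero_of_not_summable h] at hsum
    norm_num at hsum
  have hple : ∀ k, p k ≤ 1 := by
    intro k
    rw [← hsum]
    exact Summable.le_tsum hP k (fun j _ => hp j)
  -- p₀ < 1
  have hk₀pos : (0:ℝ) < (k₀:ℝ) := by exact_mod_cast hk₀
  have hpk1pos : 0 < p (k₀+1) := by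
    rw [hform (k₀+1) (by omega)]
    have : (0:ℝ) < ((k₀+1:ℕ):ℝ) := by positivity
    positivity
  have hpair : p k₀ + p (k₀+1) ≤ 1 := by
    rw [← hsum]
    have hne : k₀ ≠ k₀ + 1 := by omega
    have := Summable.sum_le_tsum ({k₀, k₀+1} : Finset ℕ) (fun j _ => hp j) hP
    rwa [Finset.sum_pair hne] at this
  have hp₀1 : s7q lam c (k₀:ℝ) < 1 := by
    have : p k₀ = s7q lam c (k₀:ℝ) := hform k₀ le_rfl
    rw [← this]
    linarith
  have hp₀pos : 0 < s7q lam c (k₀:ℝ) := s7q_pos hc hk₀pos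
  -- summability of summands
  have hsummand : ∀ n : ℕ, Summable (fun k => p k * (1 - p k)^n) := by
    intro n
    apply Summable.of_nonneg_of_le
      (fun k => mul_nonneg (hp k) (pow_nonneg (by linarith [hple k]) n)) ?_ hP
    intro k
    calc p k * (1 - p k)^n ≤ p k * 1 :=
        mul_le_mul_of_nonneg_left
          (pow_le_one₀ (by linarith [hple k]) (by linarith [hp k])) (hp k)
      _ = p k := mul_one _
  have hdecomp : ∀ n : ℕ, (∑' k, p k * (1 - p k)^n)
      = (∑ i ∈ Finset.range k₀, p i * (1 - p i)^n)
        + ∑' i : ℕ, s7G lam c n ((k₀+i:ℕ):ℝ) := by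
    intro n
    rw [← Summable.sum_add_tsum_nat_add k₀ (hsummand n)]
    congr 1
    apply tsum_congr
    intro i
    rw [show i + k₀ = k₀ + i from by omega, hform (k₀+i) (by omega)]
    rfl
  -- head tends to zero
  have hhead : Tendsto (fun n : ℕ => (n:ℝ) ^ ((1:ℝ) - 1/lam)
      * ∑ i ∈ Finset.range k₀, p i * (1 - p i)^n) atTop (𝓝 0) := by
    have : ∀ n : ℕ, (n:ℝ) ^ ((1:ℝ) - 1/lam) * ∑ i ∈ Finset.range k₀, p i * (1 - p i)^n
        = ∑ i ∈ Finset.range k₀, (n:ℝ) ^ ((1:ℝ) - 1/lam) * (p i * (1 - p i)^n) := by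
      intro n; rw [Finset.mul_sum]
    simp only [this]
    have hzero : (0:ℝ) = ∑ _i ∈ Finset.range k₀, (0:ℝ) := by simp
    rw [hzero]
    apply tendsto_finset_sum
    intro i _
    rcases eq_or_lt_of_le (hp i) with hzero | hpos
    · simp only [← hzero]
      simpa using tendsto_const_nhds (α := ℝ) (f := atTop (α := ℕ))
    · have hr0 : 0 ≤ 1 - p i := by linarith [hple i]
      have hr1 : 1 - p i < 1 := by linarith
      have hmaj : Tendsto (fun n : ℕ => (n:ℝ) * (1 - p i)^n) atTop (𝓝 0) := by
        simpa using tendsto_pow_const_mul_const_pow_of_lt_one 1 hr0 hr1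
      apply tendsto_of_tendsto_of_tendsto_of_le_of_le' tendsto_const_nhds hmaj
      · filter_upwards with n
        positivity
      · filter_upwards [eventually_ge_atTop 1] with n hn
        have hnR : (1:ℝ) ≤ (n:ℝ) := by exact_mod_cast hn
        have h1 : (n:ℝ) ^ ((1:ℝ) - 1/lam) ≤ (n:ℝ) := by
          calc (n:ℝ) ^ ((1:ℝ) - 1/lam) ≤ (n:ℝ) ^ (1:ℝ) :=
              Real.rpow_le_rpow_of_exponent_le hnR (by linarith)
            _ = (n:ℝ) := Real.rpow_one _
        have h2 : 0 ≤ (1 - p i)^n := pow_nonneg hr0 n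
        have hna : (0:ℝ) ≤ (n:ℝ) ^ ((1:ℝ) - 1/lam) :=
          Real.rpow_nonneg (Nat.cast_nonneg n) _
        calc (n:ℝ) ^ ((1:ℝ) - 1/lam) * (p i * (1 - p i)^n)
            ≤ (n:ℝ) ^ ((1:ℝ) - 1/lam) * (1 * (1 - p i)^n) :=
              mul_le_mul_of_nonneg_left
                (mul_le_mul_of_nonneg_right (hple i) h2) hna
          _ = (n:ℝ) ^ ((1:ℝ) - 1/lam) * (1 - p i)^n := by ring
          _ ≤ (n:ℝ) * (1 - p i)^n := mul_le_mul_of_nonneg_right h1 h2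
  -- beta limit in s7W form
  have hbeta : Tendsto (fun n : ℕ => (n:ℝ) ^ ((1:ℝ) - 1/lam)
      * ∫ u in (0:ℝ)..(s7q lam c (k₀:ℝ)), s7W lam n u) atTop
      (𝓝 (Real.Gamma (1 - 1/lam))) := by
    have h := stmt7_beta_cut (s := 1 - 1/lam) (by linarith) (by linarith) hp₀pos hp₀1
    apply h.congr
    intro n
    congr 1
    apply intervalIntegral.integral_congr
    intro u _
    simp only [s7W]
    rw [show (1 - 1/lam - 1 : ℝ) = -(1/lam) from by ring]
  -- error term tends to zero
  have herr : Tendsto (fun n : ℕ => (n:ℝ) ^ ((1:ℝ) - 1/lam) * (1/(Real.exp 1 * n)))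
      atTop (𝓝 0) := by
    have heq : (fun n : ℕ => (n:ℝ) ^ ((1:ℝ) - 1/lam) * (1/(Real.exp 1 * n)))
        =ᶠ[atTop] (fun n : ℕ => (n:ℝ) ^ (-(1/lam)) * (Real.exp 1)⁻¹) := by
      filter_upwards [eventually_ge_atTop 1] with n hn
      have hnpos : (0:ℝ) < n := by exact_mod_cast hn
      have he := Real.exp_pos (1:ℝ)
      rw [show ((1:ℝ) - 1/lam) = 1 + (-(1/lam)) from by ring, Real.rpow_add hnpos,
        Real.rpow_one]
      field_simp
    apply Tendsto.congr' heq.symm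
    have := ((tendsto_rpow_neg_atTop hs0).comp
      (tendsto_natCast_atTop_atTop (R := ℝ))).mul_const (Real.exp 1)⁻¹
    simpa using this
  -- key tail limit
  have hkey : Tendsto (fun n : ℕ => (n:ℝ) ^ ((1:ℝ) - 1/lam)
      * ∑' i : ℕ, s7G lam c n ((k₀+i:ℕ):ℝ)) atTop
      (𝓝 (c ^ (1/lam) * lam⁻¹ * Real.Gamma (1 - 1/lam))) := by
    have hLo : Tendsto (fun n : ℕ => (c ^ (1/lam) * lam⁻¹)
        * ((n:ℝ) ^ ((1:ℝ) - 1/lam) * ∫ u in (0:ℝ)..(s7q lam c (k₀:ℝ)), s7W lam n u)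
        - (n:ℝ) ^ ((1:ℝ) - 1/lam) * (1/(Real.exp 1 * n))) atTop
        (𝓝 (c ^ (1/lam) * lam⁻¹ * Real.Gamma (1 - 1/lam))) := by
      have := (hbeta.const_mul (c ^ (1/lam) * lam⁻¹)).sub herr
      simpa using this
    have hHi : Tendsto (fun n : ℕ => (c ^ (1/lam) * lam⁻¹)
        * ((n:ℝ) ^ ((1:ℝ) - 1/lam) * ∫ u in (0:ℝ)..(s7q lam c (k₀:ℝ)), s7W lam n u)
        + 2 * ((n:ℝ) ^ ((1:ℝ) - 1/lam) * (1/(Real.exp 1 * n)))) atTop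
        (𝓝 (c ^ (1/lam) * lam⁻¹ * Real.Gamma (1 - 1/lam))) := by
      have := (hbeta.const_mul (c ^ (1/lam) * lam⁻¹)).add
        (herr.const_mul (2:ℝ))
      simpa using this
    apply tendsto_of_tendsto_of_tendsto_of_le_of_le' hLo hHi
    · filter_upwards [eventually_ge_atTop 1] with n hn
      have hcore := (stmt7_core hlam hc hk₀ hp₀1 (n := n) hn).1
      have hna : (0:ℝ) ≤ (n:ℝ) ^ ((1:ℝ) - 1/lam) :=
        Real.rpow_nonneg (Nat.cast_nonneg n) _
      have := mul_le_mul_of_nonneg_left hcore hna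
      nlinarith [this]
    · filter_upwards [eventually_ge_atTop 1] with n hn
      have hcore := (stmt7_core hlam hc hk₀ hp₀1 (n := n) hn).2
      have hna : (0:ℝ) ≤ (n:ℝ) ^ ((1:ℝ) - 1/lam) :=
        Real.rpow_nonneg (Nat.cast_nonneg n) _
      have := mul_le_mul_of_nonneg_left hcore hna
      nlinarith [this]
  -- combine
  have hfun : ∀ n : ℕ, (n:ℝ) ^ ((1:ℝ) - 1/lam) * ∑' k, p k * (1 - p k)^n
      = (n:ℝ) ^ ((1:ℝ) - 1/lam) * (∑ i ∈ Finset.range k₀, p i * (1 - p i)^n)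
        + (n:ℝ) ^ ((1:ℝ) - 1/lam) * ∑' i : ℕ, s7G lam c n ((k₀+i:ℕ):ℝ) := by
    intro n
    rw [hdecomp n, mul_add]
  simp only [hfun]
  simpa using hhead.add hkey
end

section
/- Let P = {p_i : i ≥ 1} and Q = {q_k : k ≥ 1} be probability distributions on a countably infinite alphabet with all probabilities positive and Q non-increasing, such that p_k = c_1 k^{−r} e^{−λ k} and q_k = c_2 e^{−λ k} for all k ≥ k_0, where k_0 ≥ 1 is an integer and λ > 0, r > 0, c_1 > 0, c_2 > 0 are constants. Then Q dominates P; moreover, for all sufficiently large k each interval (q_{k+1}, q_k] contains at most one term p_j. -/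
/-!
For `k ≥ k₀` the ratio `q_{k+1} / q_k` is exactly `e^{-λ}`, while for `k₀ ≤ i < j` the factor
`j^{-r} ≤ i^{-r}` gives `p_j ≤ e^{-λ} p_i`. So two terms `p_i, p_j` with `k₀ ≤ i < j` cannot
both lie in `(q_{k+1}, q_k]`: `p_j ≤ e^{-λ} q_k = q_{k+1}`. The finitely many `p_i` with `i < k₀`
are positive, hence above `q_k` once `k` is large, and the finitely many small `k` only see the
finitely many `p_i > q_K`.
-/

open Filter Topology

/-- A non-increasing distribution `Q` dominates `P` if there is a finite positive integer
`M` such that `#{i : q_{k+1} < p_i ≤ q_k} ≤ M` for every `k`. -/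
def Dominates (q p : ℕ → ℝ) : Prop :=
  ∃ M : ℕ, 0 < M ∧ ∀ k : ℕ, {i : ℕ | q (k + 1) < p i ∧ p i ≤ q k}.encard ≤ (M : ℕ∞)

lemma tendsto_atTop_zero_of_tsum_eq_one {p : ℕ → ℝ} (h : ∑' i, p i = 1) :
    Tendsto p atTop (𝓝 0) := by
  have hs : Summable p := by
    by_contra hs
    rw [tsum_eq_zero_of_not_summable hs] at h
    exact zero_ne_one h
  exact hs.tendsto_atTop_zero

lemma finite_setOf_lt_of_tendsto_zero {p : ℕ → ℝ} (hp : Tendsto p atTop (𝓝 0)) {ε : ℝ}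
    (hε : 0 < ε) : {i | ε < p i}.Finite := by
  have hev : ∀ᶠ i in cofinite, p i < ε := Nat.cofinite_eq_atTop ▸ hp.eventually_lt_const hε
  exact (eventually_cofinite.1 hev).subset fun _ hi => hi.le.not_gt

lemma dominates_of_eventually_encard_le {p q : ℕ → ℝ} (hq : ∀ k, 0 < q k)
    (hqmono : Antitone q) (hp : Tendsto p atTop (𝓝 0)) {M : ℕ}
    (hM : ∀ᶠ k in atTop, {i | q (k + 1) < p i ∧ p i ≤ q k}.encard ≤ M) : Dominates q p := by
  obtain ⟨K, hK⟩ := eventually_atTop.1 hM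
  have hF := finite_setOf_lt_of_tendsto_zero hp (hq K)
  refine ⟨M + hF.toFinset.card + 1, by omega, fun k => ?_⟩
  push_cast
  rcases le_or_gt K k with hk | hk
  · calc _ ≤ (M : ℕ∞) := hK k hk
      _ ≤ _ := by rw [add_assoc]; exact le_self_add
  · have hsub : {i | q (k + 1) < p i ∧ p i ≤ q k} ⊆ {i | q K < p i} :=
      fun i hi => (hqmono (Nat.succ_le_of_lt hk)).trans_lt hi.1
    calc _ ≤ {i | q K < p i}.encard := Set.encard_le_encard hsub
      _ = (hF.toFinset.card : ℕ∞) := hF.encard_eq_coe_toFinset_card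
      _ ≤ _ := by rw [add_comm (M : ℕ∞), add_assoc]; exact le_self_add

lemma subsingleton_setOf_mem_Ioc_of_geometric {p q : ℕ → ℝ} {a : ℝ} {N k : ℕ} (ha : 0 ≤ a)
    (hp : ∀ i j, N ≤ i → i < j → p j ≤ a * p i) (hq : q (k + 1) = a * q k) :
    {i | N ≤ i ∧ q (k + 1) < p i ∧ p i ≤ q k}.Subsingleton := by
  have key : ∀ i j, N ≤ i → i < j → p i ≤ q k → q (k + 1) < p j → False := by
    intro i j hi hij hik hjk
    have := mul_le_mul_of_nonneg_left hik ha
    linarith [hp i j hi hij]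
  rintro i ⟨hi, hi₁, hi₂⟩ j ⟨hj, hj₁, hj₂⟩
  by_contra hne
  rcases lt_or_gt_of_ne hne with hij | hji
  exacts [key i j hi hij hi₂ hj₁, key j i hj hji hj₂ hi₁]

lemma mul_rpow_neg_mul_exp_le_of_add_one_le {c r lam x y : ℝ} (hc : 0 ≤ c) (hr : 0 ≤ r)
    (hlam : 0 ≤ lam) (hx : 0 < x) (hxy : x + 1 ≤ y) :
    c * y ^ (-r) * Real.exp (-lam * y) ≤ Real.exp (-lam) * (c * x ^ (-r) * Real.exp (-lam * x)) := by
  have hpow : y ^ (-r) ≤ x ^ (-r) := Real.rpow_le_rpow_of_nonpos hx (by linarith) (by linarith)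
  have hexp : Real.exp (-lam * y) ≤ Real.exp (-lam) * Real.exp (-lam * x) := by
    rw [← Real.exp_add, Real.exp_le_exp]
    nlinarith
  calc c * y ^ (-r) * Real.exp (-lam * y)
      ≤ c * x ^ (-r) * (Real.exp (-lam) * Real.exp (-lam * x)) := by gcongr
    _ = _ := by ring

theorem stmt15_general (p q : ℕ → ℝ) (hp : ∀ i, 0 < p i) (hq : ∀ k, 0 < q k)
    (hpsum : ∑' i, p i = 1) (hqsum : ∑' k, q k = 1) (hqmono : Antitone q)
    (c₁ c₂ lam r : ℝ) (hc₁ : 0 < c₁) (hlam : 0 < lam) (hr : 0 < r)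
    (k₀ : ℕ) (hk₀ : 1 ≤ k₀)
    (hpform : ∀ k : ℕ, k₀ ≤ k → p k = c₁ * (k : ℝ) ^ (-r) * Real.exp (-lam * (k : ℝ)))
    (hqform : ∀ k : ℕ, k₀ ≤ k → q k = c₂ * Real.exp (-lam * (k : ℝ))) :
    Dominates q p ∧
      ∀ᶠ k : ℕ in atTop, {j : ℕ | q (k + 1) < p j ∧ p j ≤ q k}.encard ≤ 1 := by
  have hp_ratio : ∀ i j, k₀ ≤ i → i < j → p j ≤ Real.exp (-lam) * p i := by
    intro i j hi hij
    rw [hpform i hi, hpform j (hi.trans hij.le)]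
    exact mul_rpow_neg_mul_exp_le_of_add_one_le hc₁.le hr.le hlam.le
      (by exact_mod_cast hk₀.trans hi) (by exact_mod_cast hij)
  have hq_ratio : ∀ k, k₀ ≤ k → q (k + 1) = Real.exp (-lam) * q k := by
    intro k hk
    rw [hqform k hk, hqform (k + 1) (hk.trans k.le_succ), mul_left_comm, ← Real.exp_add]
    push_cast
    ring_nf
  have hq0 := tendsto_atTop_zero_of_tsum_eq_one hqsum
  have hsmall : ∀ᶠ k in atTop, ∀ i ∈ Finset.range k₀, q k < p i :=
    (eventually_all_finset _).2 fun i _ => hq0.eventually_lt_const (hp i)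
  have hone : ∀ᶠ k in atTop, {j | q (k + 1) < p j ∧ p j ≤ q k}.encard ≤ 1 := by
    filter_upwards [hsmall, eventually_ge_atTop k₀] with k hk hkk₀
    rw [Set.encard_le_one_iff_subsingleton]
    refine (subsingleton_setOf_mem_Ioc_of_geometric (Real.exp_pos _).le hp_ratio
      (hq_ratio k hkk₀)).anti fun j hj => ⟨?_, hj⟩
    by_contra hj₀
    exact (hk j (Finset.mem_range.2 (not_le.1 hj₀))).not_ge hj.2
  exact ⟨dominates_of_eventually_encard_le hq hqmono
    (tendsto_atTop_zero_of_tsum_eq_one hpsum) (by exact_mod_cast hone), hone⟩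

/-- If `p_k = c₁ k^(−r) e^(−λk)` and `q_k = c₂ e^(−λk)` for all `k ≥ k₀`, with `λ, r > 0`,
then `Q` dominates `P`; moreover, for all sufficiently large `k`, each interval
`(q_{k+1}, q_k]` contains at most one term `p_j`. -/
theorem stmt15 (p q : ℕ → ℝ) (hp : ∀ i, 0 < p i) (hq : ∀ k, 0 < q k)
    (hpsum : ∑' i, p i = 1) (hqsum : ∑' k, q k = 1) (hqmono : Antitone q)
    (c₁ c₂ lam r : ℝ) (hc₁ : 0 < c₁) (hc₂ : 0 < c₂) (hlam : 0 < lam) (hr : 0 < r)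
    (k₀ : ℕ) (hk₀ : 1 ≤ k₀)
    (hpform : ∀ k : ℕ, k₀ ≤ k → p k = c₁ * (k : ℝ) ^ (-r) * Real.exp (-lam * (k : ℝ)))
    (hqform : ∀ k : ℕ, k₀ ≤ k → q k = c₂ * Real.exp (-lam * (k : ℝ))) :
    Dominates q p ∧
      ∀ᶠ k : ℕ in atTop, {j : ℕ | q (k + 1) < p j ∧ p j ≤ q k}.encard ≤ 1 :=
  stmt15_general p q hp hq hpsum hqsum hqmono c₁ c₂ lam r hc₁ hlam hr k₀ hk₀ hpform hqform
end

section
/- Let P = {p_i : i ≥ 1} and Q = {q_k : k ≥ 1} be probability distributions on a countably infinite alphabet with all probabilities positive and Q non-increasing, such that p_k = c_1 k^{r} e^{−λ k} and q_k = c_2 e^{−(λ/2) k} for all k ≥ k_0, where k_0 ≥ 1 is an integer and λ > 0, r > 0, c_1 > 0, c_2 > 0 are constants. Then Q dominates P; moreover, for all sufficiently large k each interval (q_{k+1}, q_k] contains at most one term p_j. -/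
/-!
For large `j` the ratio `p_j / p_{j+1} = (j / (j+1))^r e^λ` exceeds `e^{λ/2}`, which is the
constant ratio `q_k / q_{k+1}`. Once every `p_j` with small index lies above `q_k`, two indices
`a < b` in `(q_{k+1}, q_k]` would give
`q_{k+1} < p_b ≤ p_{a+1} ≤ e^{-λ/2} p_a ≤ e^{-λ/2} q_k = q_{k+1}`.
The finitely many remaining intervals `(q_{k+1}, q_k] ⊆ (q_K, ∞)` only meet finitely many `p_j`,
because `p_j → 0`.
-/

open Filter Topology

open Real

theorem eventually_exp_mul_rpow_mul_exp_succ_le (r : ℝ) {μ lam : ℝ} (hμ : μ < lam) :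
    ∀ᶠ j : ℕ in atTop, exp μ * (((j : ℝ) + 1) ^ r * exp (-lam * ((j : ℝ) + 1))) ≤
      (j : ℝ) ^ r * exp (-lam * j) := by
  have hlim : Tendsto (fun j : ℕ => ((j : ℝ) / (j + 1)) ^ r) atTop (𝓝 1) := by
    simpa using (tendsto_natCast_div_add_atTop (1 : ℝ)).rpow_const (Or.inl one_ne_zero)
  filter_upwards [hlim.eventually (lt_mem_nhds (exp_lt_one_iff.mpr (sub_neg.mpr hμ)))]
    with j hj
  rw [div_rpow (by positivity) (by positivity), lt_div_iff₀ (by positivity)] at hj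
  have hexp : exp μ * exp (-lam * ((j : ℝ) + 1)) = exp (μ - lam) * exp (-lam * j) := by
    rw [← exp_add, ← exp_add]
    ring_nf
  calc exp μ * (((j : ℝ) + 1) ^ r * exp (-lam * ((j : ℝ) + 1)))
      = exp (μ - lam) * ((j : ℝ) + 1) ^ r * exp (-lam * j) := by
        linear_combination ((j : ℝ) + 1) ^ r * hexp
    _ ≤ (j : ℝ) ^ r * exp (-lam * j) := by gcongr

theorem encard_le_one_of_geometric_ratio {p q : ℕ → ℝ} {ρ : ℝ} (hρ : 1 ≤ ρ)
    (hp : ∀ j, 0 ≤ p j) {N k : ℕ} (hpρ : ∀ j ≥ N, ρ * p (j + 1) ≤ p j)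
    (hqρ : q k = ρ * q (k + 1)) (hpq : ∀ j < N, q k < p j) :
    {j : ℕ | q (k + 1) < p j ∧ p j ≤ q k}.encard ≤ 1 := by
  have hanti : AntitoneOn p {j | N ≤ j} :=
    antitoneOn_nat_Ici_of_succ_le fun j hj =>
      (le_mul_of_one_le_left (hp _) hρ).trans (hpρ j hj)
  have hnot_lt : ∀ a b, (q (k + 1) < p a ∧ p a ≤ q k) →
      (q (k + 1) < p b ∧ p b ≤ q k) → ¬ a < b := by
    rintro a b ⟨-, ha⟩ ⟨hb, -⟩ hab
    have hNa : N ≤ a := not_lt.mp fun h => (hpq a h).not_ge ha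
    have hba : p b ≤ p (a + 1) := hanti (show N ≤ a + 1 by omega) (show N ≤ b by omega) hab
    have : ρ * q (k + 1) < ρ * q (k + 1) :=
      calc ρ * q (k + 1) < ρ * p b := mul_lt_mul_of_pos_left hb (by linarith)
        _ ≤ ρ * p (a + 1) := by gcongr
        _ ≤ p a := hpρ a hNa
        _ ≤ q k := ha
        _ = ρ * q (k + 1) := hqρ
    exact lt_irrefl _ this
  rw [Set.encard_le_one_iff]
  intro a b ha hb
  exact le_antisymm (not_lt.mp (hnot_lt b a hb ha)) (not_lt.mp (hnot_lt a b ha hb))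

theorem Dominates.of_eventually_encard_le {p q : ℕ → ℝ} (hq : ∀ k, 0 < q k)
    (hqmono : Antitone q) (hp : Tendsto p atTop (𝓝 0)) {M : ℕ}
    (hM : ∀ᶠ k in atTop, {j : ℕ | q (k + 1) < p j ∧ p j ≤ q k}.encard ≤ M) :
    Dominates q p := by
  obtain ⟨K, hK⟩ := eventually_atTop.mp hM
  have hfin : {j | q K < p j}.Finite := by
    rw [← Nat.cofinite_eq_atTop] at hp
    exact (eventually_cofinite.mp (hp.eventually (gt_mem_nhds (hq K)))).subset
      fun j hj => not_lt.mpr (le_of_lt hj)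
  obtain ⟨n, hn⟩ := ENat.ne_top_iff_exists.mp hfin.encard_lt_top.ne
  refine ⟨M + n + 1, by omega, fun k => ?_⟩
  rcases le_or_gt K k with hk | hk
  · exact (hK k hk).trans (by norm_cast; omega)
  · calc {j : ℕ | q (k + 1) < p j ∧ p j ≤ q k}.encard
        ≤ {j | q K < p j}.encard := Set.encard_mono fun j hj => (hqmono hk).trans_lt hj.1
      _ = n := hn.symm
      _ ≤ _ := by norm_cast; omega

theorem stmt16_general (p q : ℕ → ℝ) (hp : ∀ i, 0 < p i) (hq : ∀ k, 0 < q k)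
    (hpsum : ∑' i, p i = 1) (hqsum : ∑' k, q k = 1) (hqmono : Antitone q)
    (c₁ c₂ lam r : ℝ) (hc₁ : 0 < c₁) (hlam : 0 < lam)
    (k₀ : ℕ)
    (hpform : ∀ k : ℕ, k₀ ≤ k → p k = c₁ * (k : ℝ) ^ r * Real.exp (-lam * (k : ℝ)))
    (hqform : ∀ k : ℕ, k₀ ≤ k → q k = c₂ * Real.exp (-(lam / 2) * (k : ℝ))) :
    Dominates q p ∧
      ∀ᶠ k : ℕ in atTop, {j : ℕ | q (k + 1) < p j ∧ p j ≤ q k}.encard ≤ 1 := by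
  have hpsm : Summable p := not_not.mp fun h => by simp [tsum_eq_zero_of_not_summable h] at hpsum
  have hqsm : Summable q := not_not.mp fun h => by simp [tsum_eq_zero_of_not_summable h] at hqsum
  obtain ⟨N, hN⟩ := eventually_atTop.mp ((eventually_ge_atTop k₀).and
    (eventually_exp_mul_rpow_mul_exp_succ_le r (half_lt_self hlam)))
  have hpρ : ∀ j ≥ N, exp (lam / 2) * p (j + 1) ≤ p j := by
    intro j hj
    obtain ⟨hjk₀, hratio⟩ := hN j hj
    rw [hpform j hjk₀, hpform (j + 1) (by omega)]
    push_cast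
    linear_combination c₁ * hratio
  have hqρ : ∀ k ≥ k₀, q k = exp (lam / 2) * q (k + 1) := by
    intro k hk
    rw [hqform k hk, hqform (k + 1) (by omega), mul_left_comm, ← exp_add]
    push_cast
    ring_nf
  have hbucket : ∀ᶠ k in atTop, {j : ℕ | q (k + 1) < p j ∧ p j ≤ q k}.encard ≤ 1 := by
    have hbelow : ∀ᶠ k in atTop, ∀ j ∈ Finset.range N, q k < p j :=
      (eventually_all_finset _).mpr
        fun j _ => hqsm.tendsto_atTop_zero.eventually (gt_mem_nhds (hp j))
    filter_upwards [eventually_ge_atTop k₀, hbelow] with k hk hbelow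
    exact encard_le_one_of_geometric_ratio (one_le_exp (by positivity)) (fun j => (hp j).le)
      hpρ (hqρ k hk) fun j hj => hbelow j (Finset.mem_range.mpr hj)
  exact ⟨.of_eventually_encard_le (M := 1) hq hqmono hpsm.tendsto_atTop_zero
    (by simpa using hbucket), hbucket⟩

/-- If `p_k = c₁ k^r e^(−λk)` and `q_k = c₂ e^(−(λ/2)k)` for all `k ≥ k₀`, with `λ, r > 0`,
then `Q` dominates `P`; moreover, for all sufficiently large `k`, each interval
`(q_{k+1}, q_k]` contains at most one term `p_j`. -/
theorem stmt16 (p q : ℕ → ℝ) (hp : ∀ i, 0 < p i) (hq : ∀ k, 0 < q k)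
    (hpsum : ∑' i, p i = 1) (hqsum : ∑' k, q k = 1) (hqmono : Antitone q)
    (c₁ c₂ lam r : ℝ) (hc₁ : 0 < c₁) (hc₂ : 0 < c₂) (hlam : 0 < lam) (hr : 0 < r)
    (k₀ : ℕ) (hk₀ : 1 ≤ k₀)
    (hpform : ∀ k : ℕ, k₀ ≤ k → p k = c₁ * (k : ℝ) ^ r * Real.exp (-lam * (k : ℝ)))
    (hqform : ∀ k : ℕ, k₀ ≤ k → q k = c₂ * Real.exp (-(lam / 2) * (k : ℝ))) :
    Dominates q p ∧
      ∀ᶠ k : ℕ in atTop, {j : ℕ | q (k + 1) < p j ∧ p j ≤ q k}.encard ≤ 1 :=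
  stmt16_general p q hp hq hpsum hqsum hqmono c₁ c₂ lam r hc₁ hlam k₀ hpform hqform
end

section
/- For every strictly decreasing probability distribution Q = {q_k : k ≥ 1} on a countably infinite alphabet with all q_k > 0, there exists a probability distribution P = {p_k : k ≥ 1} with all p_k > 0 such that p_k ≤ q_k for every k ≥ 2 (so P has a thinner tail than Q in the usual sense), yet Q does not dominate P: for every positive integer M there exists k ≥ 1 with #{i ≥ 1 : q_{k+1} < p_i ≤ q_k} > M. -/
open Filter Topology

/-!
Replace `q i` by `q (2 ^ (log₂ i + 1))`, the value of `q` at the first power of two beyond `i`.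
This lowers every term, and the `2 ^ n` indices of `[2 ^ n, 2 ^ (n + 1))` all receive the same
value `q (2 ^ (n + 1))`, so they all lie in `(q (k + 1), q k]` for `k = 2 ^ (n + 1)`.
The mass lost by lowering is put back on the index `0`.
-/

lemma lt_two_pow_log_succ (i : ℕ) : i < 2 ^ (Nat.log 2 i + 1) :=
  Nat.lt_pow_succ_log_self one_lt_two i

lemma two_pow_log_succ_of_mem_Ico {n i : ℕ} (hi : i ∈ Finset.Ico (2 ^ n) (2 ^ (n + 1))) :
    2 ^ (Nat.log 2 i + 1) = 2 ^ (n + 1) := by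
  rw [Finset.mem_Ico] at hi
  rw [Nat.log_eq_of_pow_le_of_lt_pow hi.1 hi.2]

lemma card_Ico_two_pow (n : ℕ) : (Finset.Ico (2 ^ n) (2 ^ (n + 1))).card = 2 ^ n := by
  rw [Nat.card_Ico, pow_succ]
  omega

section Lowering

variable {q : ℕ → ℝ} {g : ℕ → ℕ}

lemma summable_comp_of_le_self (hq : ∀ k, 0 < q k) (hqs : Summable q) (hanti : Antitone q)
    (hg : ∀ i, i ≤ g i) : Summable (fun i => q (g i)) :=
  hqs.of_nonneg_of_le (fun _ => (hq _).le) (fun i => hanti (hg i))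

lemma tsum_comp_lt_tsum_of_lt_self (hq : ∀ k, 0 < q k) (hqs : Summable q) (hanti : StrictAnti q)
    (hg : ∀ i, i < g i) : ∑' i, q (g i) < ∑' i, q i :=
  (summable_comp_of_le_self hq hqs hanti.antitone fun i => (hg i).le).tsum_lt_tsum
    (fun i => hanti.antitone (hg i).le) (hanti (hg 0)) hqs

end Lowering

lemma exists_pos_tsum_eq_one_of_tsum_lt {r : ℕ → ℝ} (hr : ∀ i, 0 < r i) (hrs : Summable r)
    (hlt : ∑' i, r i < 1) :
    ∃ p : ℕ → ℝ, (∀ i, 0 < p i) ∧ ∑' i, p i = 1 ∧ ∀ i, i ≠ 0 → p i = r i := by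
  set c := 1 - ∑' i, r i
  refine ⟨fun i => r i + if i = 0 then c else 0, fun i => ?_, ?_, fun i hi => by simp [hi]⟩
  · have hc : 0 < c := sub_pos.2 hlt
    have := hr i
    dsimp only
    split_ifs <;> linarith
  · rw [Summable.tsum_add hrs (summable_of_ne_finset_zero (s := {0}) (by simp_all)),
      tsum_ite_eq 0 (fun _ => c)]
    ring

lemma card_le_encard_of_eqOn {p q : ℕ → ℝ} (hanti : StrictAnti q) {k : ℕ} {s : Finset ℕ}
    (hs : ∀ i ∈ s, p i = q k) : (s.card : ℕ∞) ≤ {i | q (k + 1) < p i ∧ p i ≤ q k}.encard := by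
  rw [← Set.encard_coe_eq_coe_finsetCard]
  refine Set.encard_mono fun i hi => ?_
  rw [Set.mem_ofPred_eq, hs i hi]
  exact ⟨hanti (Nat.lt_succ_self k), le_rfl⟩

/-- For every strictly decreasing positive distribution `Q` there is a positive
distribution `P` with `p_k ≤ q_k` for all `k ≥ 2` (a thinner tail in the usual sense)
such that `Q` does not dominate `P`: the number of terms `p_i` in `(q_{k+1}, q_k]`
is unbounded over `k`. -/
theorem stmt17 (q : ℕ → ℝ) (hq : ∀ k, 0 < q k) (hqsum : ∑' k, q k = 1)
    (hqanti : StrictAnti q) :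
    ∃ p : ℕ → ℝ, (∀ k, 0 < p k) ∧ (∑' k, p k = 1) ∧
      (∀ k : ℕ, 2 ≤ k → p k ≤ q k) ∧
      ∀ M : ℕ, 1 ≤ M →
        ∃ k : ℕ, (M : ℕ∞) < {i : ℕ | q (k + 1) < p i ∧ p i ≤ q k}.encard := by
  have hqs : Summable q := by
    by_contra h
    rw [tsum_eq_zero_of_not_summable h] at hqsum
    exact zero_ne_one hqsum
  obtain ⟨p, hp_pos, hp_sum, hp_eq⟩ := exists_pos_tsum_eq_one_of_tsum_lt (fun i => hq _)
    (summable_comp_of_le_self hq hqs hqanti.antitone fun i => (lt_two_pow_log_succ i).le)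
    (hqsum ▸ tsum_comp_lt_tsum_of_lt_self hq hqs hqanti lt_two_pow_log_succ)
  refine ⟨p, hp_pos, hp_sum, fun k hk => ?_, fun M _ => ⟨2 ^ (M + 1), ?_⟩⟩
  · rw [hp_eq k (by omega)]
    exact hqanti.antitone (lt_two_pow_log_succ k).le
  · have hblock : ∀ i ∈ Finset.Ico (2 ^ M) (2 ^ (M + 1)), p i = q (2 ^ (M + 1)) := fun i hi => by
      rw [hp_eq i ((Nat.two_pow_pos M).trans_le (Finset.mem_Ico.1 hi).1).ne',
        two_pow_log_succ_of_mem_Ico hi]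
    calc (M : ℕ∞) < (2 ^ M : ℕ) := by exact_mod_cast Nat.lt_two_pow_self
      _ = (Finset.Ico (2 ^ M) (2 ^ (M + 1))).card := by rw [card_Ico_two_pow]
      _ ≤ _ := card_le_encard_of_eqOn hqanti hblock
end

section
/- For every strictly decreasing probability distribution Q = {q_k : k ≥ 1} on a countably infinite alphabet with all q_k > 0, there exists a probability distribution P = {p_k : k ≥ 1} with all p_k > 0 such that Q dominates P, yet P does not have a thinner tail than Q in the usual sense: p_{2m−1} > q_{2m−1} for every m ≥ 1 (so p_k > q_k for infinitely many k). -/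
open Filter Topology

/-! Rearranging `Q` by the involution `2j ↔ 2j + 1` gives `P`: each `p_i` is some `q_k`, so every
slice `(q_{k+1}, q_k]` holds exactly one `p_i`, while each odd-indexed `p` is the preceding,
strictly larger, `q`. -/

def pairSwap (n : ℕ) : ℕ := if Even n then n + 1 else n - 1

lemma pairSwap_two_mul (m : ℕ) : pairSwap (2 * m) = 2 * m + 1 := by
  simp [pairSwap]

lemma pairSwap_two_mul_add_one (m : ℕ) : pairSwap (2 * m + 1) = 2 * m := by
  simp [pairSwap]

lemma pairSwap_involutive : Function.Involutive pairSwap := by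
  intro n
  obtain ⟨m, rfl | rfl⟩ := Nat.even_or_odd' n
  · rw [pairSwap_two_mul, pairSwap_two_mul_add_one]
  · rw [pairSwap_two_mul_add_one, pairSwap_two_mul]

lemma StrictAnti.dominates_comp_perm {q : ℕ → ℝ} (hq : StrictAnti q) (σ : Equiv.Perm ℕ) :
    Dominates q (q ∘ σ) := by
  refine ⟨1, one_pos, fun k => ?_⟩
  have slice_eq : {i : ℕ | q (k + 1) < (q ∘ σ) i ∧ (q ∘ σ) i ≤ q k} = {σ.symm k} := by
    ext i
    simp only [Function.comp_apply, Set.mem_ofPred_eq, Set.mem_singleton_iff,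
      Equiv.eq_symm_apply, hq.lt_iff_gt, hq.le_iff_ge]
    omega
  rw [slice_eq, Set.encard_singleton]
  rfl

/-- For every strictly decreasing positive distribution `Q` there is a positive
distribution `P` dominated by `Q` that nevertheless does not have a thinner tail than
`Q` in the usual sense: `p_{2m−1} > q_{2m−1}` for every `m ≥ 1`. -/
theorem stmt18 (q : ℕ → ℝ) (hq : ∀ k, 0 < q k) (hqsum : ∑' k, q k = 1)
    (hqanti : StrictAnti q) :
    ∃ p : ℕ → ℝ, (∀ k, 0 < p k) ∧ (∑' k, p k = 1) ∧
      Dominates q p ∧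
      ∀ m : ℕ, 1 ≤ m → q (2 * m - 1) < p (2 * m - 1) := by
  let σ : Equiv.Perm ℕ := pairSwap_involutive.toPerm
  refine ⟨q ∘ σ, fun k => hq _, (σ.tsum_eq q).trans hqsum, hqanti.dominates_comp_perm σ, ?_⟩
  intro m hm
  obtain ⟨j, rfl⟩ := Nat.exists_eq_add_of_le' hm
  have hodd : 2 * (j + 1) - 1 = 2 * j + 1 := by omega
  rw [hodd]
  show q (2 * j + 1) < q (pairSwap (2 * j + 1))
  rw [pairSwap_two_mul_add_one]
  exact hqanti (Nat.lt_succ_self _)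
end

section
/- There exists a probability distribution P = {p_k : k ≥ 1} on a countably infinite alphabet with all p_k > 0 such that the tail index sequence t_n contains a subsequence {t_{n_i}} with t_{n_i} → ∞ as i → ∞ and also contains a subsequence {t_{m_i}} that is bounded above by a finite constant. Consequently P belongs to none of Domain 0, Domain 1, or Domain 2, so Domain T (the transient domain) is not empty. -/
/-!
Take one heavy letter and, for each `j`, a block of `M j = 2 ^ 4 ^ j` letters of weight
`1 / (2 M j ^ 2)`; the block masses `1 / (2 M j)` decay doubly exponentially. At time
`n = M i ^ 2` block `i` has `n w = 1 / 2`, so its `M i` letters alone contribute about `M i`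
to `t_n`, and `t_{M i ^ 2} → ∞`. At time `n = M (i + 1) = M i ^ 4` each block `j ≤ i` has
`n w ≥ M i ^ 2 / 2`, so `n x (1 - x) ^ n ≤ 2 / (n x)` makes it contribute at most `4 / M i`,
the later blocks together contribute at most `n` times their mass, which is `≤ 1`, and the heavy
letter at most `1`; hence `t_{M (i + 1)} ≤ 6`.
-/

open Filter Topology

section Subsequences

variable {t : ℕ → ℝ} {n : ℕ → ℕ}

theorem not_tendsto_nhds_of_tendsto_atTop_comp (hn : Tendsto n atTop atTop)
    (ht : Tendsto (fun i => t (n i)) atTop atTop) (a : ℝ) : ¬ Tendsto t atTop (𝓝 a) :=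
  fun h => not_tendsto_nhds_of_tendsto_atTop ht a (h.comp hn)

theorem limsup_coe_ne_coe_of_tendsto_atTop_comp (hn : Tendsto n atTop atTop)
    (ht : Tendsto (fun i => t (n i)) atTop atTop) (c : ℝ) :
    limsup (fun k => (t k : EReal)) atTop ≠ c := by
  intro hc
  have hlt : limsup (fun k => (t k : EReal)) atTop < ((c + 1 : ℝ) : EReal) := by
    rw [hc]
    exact_mod_cast lt_add_one c
  have hbdd : ∀ᶠ k in atTop, t k < c + 1 :=
    (eventually_lt_of_limsup_lt hlt).mono fun k hk => by exact_mod_cast hk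
  obtain ⟨i, hlt, hge⟩ := ((hn.eventually hbdd).and (ht.eventually_ge_atTop (c + 1))).exists
  exact (lt_irrefl _ (hlt.trans_le hge)).elim

theorem not_tendsto_atTop_of_bounded_comp (hn : Tendsto n atTop atTop) {B : ℝ}
    (hB : ∀ i, t (n i) ≤ B) : ¬ Tendsto t atTop atTop := fun h => by
  obtain ⟨i, hi⟩ := ((h.comp hn).eventually_gt_atTop B).exists
  exact (hi.trans_le (hB i)).false

end Subsequences

section OneLetter

variable {x : ℝ}

theorem mul_pow_mul_one_sub_pow_le_factorial (hx₀ : 0 ≤ x) (hx₁ : x ≤ 1) (n k : ℕ) :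
    (n * x) ^ k * (1 - x) ^ n ≤ k.factorial := by
  have hexp : (1 - x) ^ n ≤ Real.exp (-(n * x)) := by
    rw [neg_mul_eq_mul_neg, Real.exp_nat_mul]
    exact pow_le_pow_left₀ (by linarith) (Real.one_sub_le_exp_neg x) n
  have hpow : (n * x) ^ k ≤ k.factorial * Real.exp (n * x) := by
    have := Real.pow_div_factorial_le_exp _ (by positivity : 0 ≤ (n : ℝ) * x) k
    rwa [div_le_iff₀' (by positivity)] at this
  calc (n * x) ^ k * (1 - x) ^ n
      ≤ k.factorial * Real.exp (n * x) * Real.exp (-(n * x)) := by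
        gcongr
    _ = k.factorial := by rw [mul_assoc, ← Real.exp_add, add_neg_cancel, Real.exp_zero, mul_one]

theorem mul_mul_one_sub_pow_le_one (hx₀ : 0 ≤ x) (hx₁ : x ≤ 1) (n : ℕ) :
    n * x * (1 - x) ^ n ≤ 1 := by
  simpa using mul_pow_mul_one_sub_pow_le_factorial hx₀ hx₁ n 1

theorem mul_mul_one_sub_pow_le_two_div (hx₀ : 0 < x) (hx₁ : x ≤ 1) {n : ℕ} (hn : 0 < n) :
    n * x * (1 - x) ^ n ≤ 2 / (n * x) := by
  have h := mul_pow_mul_one_sub_pow_le_factorial hx₀.le hx₁ n 2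
  rw [le_div_iff₀ (by positivity)]
  simpa [sq, mul_comm, mul_assoc, mul_left_comm] using h

end OneLetter

theorem hasSum_sigma_fin_of_nonneg {β : Type*} {N : β → ℕ} {g : β → ℝ} {a : ℝ}
    (hg : ∀ j, 0 ≤ g j) (h : HasSum (fun j => (N j : ℝ) * g j) a) :
    HasSum (fun x : Σ j, Fin (N j) => g x.1) a := by
  have hfib (j : β) : HasSum (fun _ : Fin (N j) => g j) (N j * g j) := by
    simpa using hasSum_fintype (fun _ : Fin (N j) => g j)
  have hs : Summable (fun x : Σ j, Fin (N j) => g x.1) :=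
    (summable_sigma_of_nonneg fun x => hg x.1).2
      ⟨fun j => (hfib j).summable, by simpa only [(hfib _).tsum_eq] using h.summable⟩
  simpa only [(hs.hasSum.sigma hfib).unique h] using hs.hasSum

namespace TransientExample

def M (j : ℕ) : ℕ := 2 ^ 4 ^ j

theorem M_succ (j : ℕ) : M (j + 1) = M j ^ 4 := by
  rw [M, M, ← pow_mul, pow_succ]

theorem M_strictMono : StrictMono M := fun _ _ h =>
  Nat.pow_lt_pow_right one_lt_two (Nat.pow_lt_pow_right (by norm_num) h)

theorem two_pow_succ_le_M (j : ℕ) : 2 ^ (j + 1) ≤ M j := by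
  refine Nat.pow_le_pow_right two_pos ?_
  calc j + 1 ≤ 2 ^ j := Nat.lt_two_pow_self
    _ ≤ 4 ^ j := Nat.pow_le_pow_left (by norm_num) j

theorem succ_le_M (j : ℕ) : j + 1 ≤ M j :=
  (Nat.lt_two_pow_self).le.trans (two_pow_succ_le_M j)

theorem M_pos (j : ℕ) : 0 < M j := by
  have := succ_le_M j
  omega

theorem M_mul_two_pow_le (a k : ℕ) : M a * 2 ^ k ≤ M (a + k) := by
  induction k with
  | zero => simp
  | succ k ih =>
    have h2 : 2 ≤ M (a + k) := (two_pow_succ_le_M _).trans' (Nat.le_self_pow (by omega) 2)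
    calc M a * 2 ^ (k + 1) = M a * 2 ^ k * 2 := by ring
      _ ≤ M (a + k) * M (a + k) ^ 3 := by gcongr; exact h2.trans (Nat.le_self_pow (by norm_num) _)
      _ = M (a + (k + 1)) := by rw [← add_assoc, M_succ]; ring

noncomputable def w (j : ℕ) : ℝ := (2 * (M j : ℝ) ^ 2)⁻¹

theorem w_pos (j : ℕ) : 0 < w j := by
  have := M_pos j
  unfold w
  positivity

theorem w_le_one (j : ℕ) : w j ≤ 1 := by
  have : (1 : ℝ) ≤ M j := by exact_mod_cast M_pos j
  unfold w
  exact inv_le_one_of_one_le₀ (by nlinarith)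

theorem M_mul_w (j : ℕ) : (M j : ℝ) * w j = (2 * (M j : ℝ))⁻¹ := by
  have : (M j : ℝ) ≠ 0 := by exact_mod_cast (M_pos j).ne'
  unfold w
  field_simp

theorem inv_two_mul_M_le (j : ℕ) : ((2 : ℝ) * M j)⁻¹ ≤ (1 / 4) * (1 / 2) ^ j := by
  have h : ((2 : ℕ) : ℝ) ^ (j + 1) ≤ M j := by exact_mod_cast two_pow_succ_le_M j
  push_cast at h
  have hM : (0 : ℝ) < M j := by exact_mod_cast M_pos j
  rw [← one_div, div_le_iff₀ (by positivity)]
  calc (1 : ℝ) = 1 / 4 * (1 / 2) ^ j * (2 * 2 ^ (j + 1)) := by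
        rw [pow_succ, one_div_pow]
        field_simp
        ring
    _ ≤ 1 / 4 * (1 / 2) ^ j * (2 * M j) := by gcongr

theorem summable_inv_two_mul_M : Summable fun j => ((2 : ℝ) * M j)⁻¹ :=
  .of_nonneg_of_le (fun _ => by positivity) inv_two_mul_M_le
    ((summable_geometric_of_lt_one (by norm_num) (by norm_num)).mul_left _)

noncomputable def p₀ : ℝ := 1 - ∑' j, ((2 : ℝ) * M j)⁻¹

theorem p₀_pos : 0 < p₀ := by
  have h := Summable.tsum_le_tsum inv_two_mul_M_le summable_inv_two_mul_M
    ((summable_geometric_of_lt_one (by norm_num) (by norm_num)).mul_left (1 / 4 : ℝ))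
  rw [tsum_mul_left, tsum_geometric_of_lt_one (by norm_num) (by norm_num)] at h
  unfold p₀
  linarith

theorem p₀_le_one : p₀ ≤ 1 := by
  have : 0 ≤ ∑' j, ((2 : ℝ) * M j)⁻¹ := tsum_nonneg fun j => by positivity
  unfold p₀
  linarith

-- Block `0` is the heavy letter; block `j + 1` holds the `M j` letters of weight `w j`.
def blockSize : ℕ → ℕ
  | 0 => 1
  | j + 1 => M j

noncomputable def blockWeight : ℕ → ℝ
  | 0 => p₀
  | j + 1 => w j

theorem blockWeight_pos : ∀ j, 0 < blockWeight j
  | 0 => p₀_pos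
  | j + 1 => w_pos j

theorem blockWeight_le_one : ∀ j, blockWeight j ≤ 1
  | 0 => p₀_le_one
  | j + 1 => w_le_one j

abbrev Letter := Σ j, Fin (blockSize j)

instance : Infinite Letter :=
  have blockSize_pos : ∀ j, 0 < blockSize j
    | 0 => one_pos
    | j + 1 => M_pos j
  Infinite.of_injective (fun j => (⟨j, ⟨0, blockSize_pos j⟩⟩ : Letter))
    fun _ _ h => congrArg Sigma.fst h

noncomputable def enum : ℕ ≃ Letter := nonempty_equiv_of_countable.some

noncomputable def p (k : ℕ) : ℝ := blockWeight (enum k).1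

theorem hasSum_comp_p {φ : ℝ → ℝ} (hφ : ∀ j, 0 ≤ φ (blockWeight j)) {a : ℝ}
    (h : HasSum (fun j => (blockSize j : ℝ) * φ (blockWeight j)) a) :
    HasSum (fun k => φ (p k)) a :=
  (enum.hasSum_iff (f := fun x : Letter => φ (blockWeight x.1))).2
    (hasSum_sigma_fin_of_nonneg hφ h)

theorem hasSum_blockMass : HasSum (fun j => (blockSize j : ℝ) * blockWeight j) 1 := by
  rw [← hasSum_nat_add_iff' 1]
  simpa [blockSize, blockWeight, M_mul_w, p₀] using summable_inv_two_mul_M.hasSum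

theorem hasSum_p : HasSum p 1 :=
  hasSum_comp_p (φ := id) (fun j => (blockWeight_pos j).le) hasSum_blockMass

noncomputable def blockTerm (n j : ℕ) : ℝ :=
  blockSize j * (n * blockWeight j * (1 - blockWeight j) ^ n)

theorem one_sub_blockWeight_pow_mem (n j : ℕ) :
    0 ≤ (1 - blockWeight j) ^ n ∧ (1 - blockWeight j) ^ n ≤ 1 := by
  have := blockWeight_pos j
  have := blockWeight_le_one j
  exact ⟨pow_nonneg (by linarith) n, pow_le_one₀ (by linarith) (by linarith)⟩

theorem blockTerm_nonneg (n j : ℕ) : 0 ≤ blockTerm n j :=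
  mul_nonneg (Nat.cast_nonneg _) (mul_nonneg
    (mul_nonneg (Nat.cast_nonneg _) (blockWeight_pos j).le) (one_sub_blockWeight_pow_mem n j).1)

theorem hasSum_blockTerm (n : ℕ) : HasSum (blockTerm n) (tailIndex p n) := by
  set φ := fun x : ℝ => x * (1 - x) ^ n
  have hφ (j : ℕ) : 0 ≤ φ (blockWeight j) :=
    mul_nonneg (blockWeight_pos j).le (one_sub_blockWeight_pow_mem n j).1
  have hs : Summable fun j => (blockSize j : ℝ) * φ (blockWeight j) :=
    .of_nonneg_of_le (fun j => mul_nonneg (Nat.cast_nonneg _) (hφ j))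
      (fun j => mul_le_mul_of_nonneg_left
        (mul_le_of_le_one_right (blockWeight_pos j).le (one_sub_blockWeight_pow_mem n j).2)
        (Nat.cast_nonneg _))
      hasSum_blockMass.summable
  have h := hasSum_comp_p hφ hs.hasSum
  rw [tailIndex, h.tsum_eq]
  have hterm : blockTerm n = fun j => n * (blockSize j * φ (blockWeight j)) := by
    funext j
    simp only [blockTerm, φ]
    ring
  exact hterm ▸ hs.hasSum.mul_left (n : ℝ)

theorem blockTerm_zero_le (n : ℕ) : blockTerm n 0 ≤ 1 := by
  simpa [blockTerm, blockSize] using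
    mul_mul_one_sub_pow_le_one (blockWeight_pos 0).le (blockWeight_le_one 0) n

theorem blockTerm_succ_le (n j : ℕ) : blockTerm n (j + 1) ≤ n / (2 * M j) := by
  calc blockTerm n (j + 1) = n * (M j * w j) * (1 - w j) ^ n := by
        simp only [blockTerm, blockSize, blockWeight]
        ring
    _ ≤ n * (M j * w j) * 1 := by
        have := w_pos j
        gcongr
        exact (one_sub_blockWeight_pow_mem n (j + 1)).2
    _ = n / (2 * M j) := by rw [M_mul_w, mul_one, div_eq_mul_inv]

theorem M_div_four_le_tailIndex (i : ℕ) : (M i : ℝ) / 4 ≤ tailIndex p (M i ^ 2) := by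
  set n := M i ^ 2
  have hM : (0 : ℝ) < M i := by exact_mod_cast M_pos i
  have hnw : (n : ℝ) * w i = 1 / 2 := by
    simp only [n, w, Nat.cast_pow]
    field_simp
  have hbern : 1 / 2 ≤ (1 - w i) ^ n := by
    have := one_add_mul_le_pow (a := -w i) (by linarith [w_le_one i]) n
    rw [← sub_eq_add_neg, mul_neg, hnw] at this
    linarith
  calc (M i : ℝ) / 4 ≤ M i * (n * w i * (1 - w i) ^ n) := by rw [hnw]; nlinarith
    _ = blockTerm n (i + 1) := rfl
    _ ≤ tailIndex p n := le_hasSum (hasSum_blockTerm n) (i + 1) fun j _ => blockTerm_nonneg n j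

theorem blockTerm_succ_le_of_le {i j : ℕ} (hj : j ≤ i) :
    blockTerm (M (i + 1)) (j + 1) ≤ 4 / M i := by
  set n := M (i + 1)
  have hMj : (0 : ℝ) < M j := by exact_mod_cast M_pos j
  have hMji : (M j : ℝ) ≤ M i := by exact_mod_cast M_strictMono.monotone hj
  have hn : (n : ℝ) = M i ^ 4 := by simp only [n, M_succ, Nat.cast_pow]
  calc blockTerm n (j + 1) = M j * (n * w j * (1 - w j) ^ n) := rfl
    _ ≤ M j * (2 / (n * w j)) := by
        gcongr
        exact mul_mul_one_sub_pow_le_two_div (w_pos j) (w_le_one j) (M_pos _)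
    _ = 4 * M j ^ 3 / M i ^ 4 := by
        rw [hn, w]
        field_simp
        ring
    _ ≤ 4 * M i ^ 3 / M i ^ 4 := by gcongr
    _ = 4 / M i := by field_simp

theorem blockTerm_add_le (i j : ℕ) : blockTerm (M (i + 1)) (j + (i + 2)) ≤ 1 / 2 / 2 ^ j := by
  have h : (M (i + 1) : ℝ) * 2 ^ j ≤ M (i + 1 + j) := by
    exact_mod_cast M_mul_two_pow_le (i + 1) j
  have hM : (0 : ℝ) < M (i + 1 + j) := by exact_mod_cast M_pos _
  calc blockTerm (M (i + 1)) (j + (i + 2)) ≤ M (i + 1) / (2 * M (i + 1 + j)) := by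
        rw [show j + (i + 2) = i + 1 + j + 1 by omega]
        exact blockTerm_succ_le _ _
    _ ≤ 1 / 2 / 2 ^ j := by
        rw [div_le_div_iff₀ (by positivity) (by positivity)]
        linarith

theorem tailIndex_le_six (i : ℕ) : tailIndex p (M (i + 1)) ≤ 6 := by
  have hs := hasSum_blockTerm (M (i + 1))
  rw [← hs.tsum_eq, ← hs.summable.sum_add_tsum_nat_add (i + 2), Finset.sum_range_succ']
  have head : ∑ j ∈ Finset.range (i + 1), blockTerm (M (i + 1)) (j + 1) ≤ 4 := by
    have hM : (0 : ℝ) < M i := by exact_mod_cast M_pos i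
    have hi : ((i + 1 : ℕ) : ℝ) ≤ M i := by exact_mod_cast succ_le_M i
    calc _ ≤ ((i + 1 : ℕ) : ℝ) * (4 / M i) := by
          simpa using Finset.sum_le_card_nsmul _ _ _
            fun j hj => blockTerm_succ_le_of_le (Finset.mem_range_succ_iff.1 hj)
      _ ≤ M i * (4 / M i) := by gcongr
      _ = 4 := mul_div_cancel₀ _ hM.ne'
  have tail : ∑' j, blockTerm (M (i + 1)) (j + (i + 2)) ≤ 1 := by
    calc _ ≤ ∑' j : ℕ, 1 / 2 / 2 ^ j :=
          ((summable_nat_add_iff _).2 hs.summable).tsum_le_tsum (blockTerm_add_le i)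
            (summable_geometric_two' 1)
      _ = 1 := tsum_geometric_two' 1
  linarith [blockTerm_zero_le (M (i + 1))]

end TransientExample

open TransientExample

/-- There is a positive distribution `P` on a countably infinite alphabet whose tail index
sequence has a subsequence tending to `∞` and a subsequence bounded above; consequently
`P` is in none of Domain 0 (`t_n → 0`), Domain 1 (`limsup t_n` a finite positive
constant), or Domain 2 (`t_n → ∞`), so Domain T is not empty. -/
theorem stmt19 :
    ∃ p : ℕ → ℝ, (∀ k, 0 < p k) ∧ (∑' k, p k = 1) ∧
      (∃ n : ℕ → ℕ, StrictMono n ∧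
        Tendsto (fun i => tailIndex p (n i)) atTop atTop) ∧
      (∃ m : ℕ → ℕ, StrictMono m ∧ ∃ B : ℝ, ∀ i, tailIndex p (m i) ≤ B) ∧
      ¬ Tendsto (tailIndex p) atTop (𝓝 0) ∧
      ¬ (∃ c : ℝ, 0 < c ∧
          Filter.limsup (fun n : ℕ => ((tailIndex p n : ℝ) : EReal)) atTop = (c : EReal)) ∧
      ¬ Tendsto (tailIndex p) atTop atTop := by
  have hn : StrictMono fun i => M i ^ 2 := fun _ _ h =>
    Nat.pow_lt_pow_left (M_strictMono h) two_ne_zero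
  have hm : StrictMono fun i => M (i + 1) := fun _ _ h => M_strictMono (by omega)
  have hunbdd : Tendsto (fun i => tailIndex p (M i ^ 2)) atTop atTop :=
    tendsto_atTop_mono M_div_four_le_tailIndex
      ((tendsto_natCast_atTop_atTop.comp M_strictMono.tendsto_atTop).atTop_div_const (by norm_num))
  refine ⟨p, fun k => blockWeight_pos _, hasSum_p.tsum_eq, ⟨_, hn, hunbdd⟩,
    ⟨_, hm, 6, tailIndex_le_six⟩,
    not_tendsto_nhds_of_tendsto_atTop_comp hn.tendsto_atTop hunbdd 0, ?_,
    not_tendsto_atTop_of_bounded_comp hm.tendsto_atTop tailIndex_le_six⟩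
  rintro ⟨c, -, hc⟩
  exact limsup_coe_ne_coe_of_tendsto_atTop_comp hn.tendsto_atTop hunbdd c hc
end
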